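/- arXiv:1712.00285 — 11 statements merged into one kernel-verified Lean document; each statement's English description precedes it below -/
import Mathlib

section
/- Let q be a prime, let G be a simple graph on a finite vertex set V, and let φ₀, φ₁, φ₂, … be the AG iteration from a proper coloring φ₀ : V → ZMod q × ZMod q. Then for every i ≥ 0 the coloring φ_i is proper, i.e., φ_i(u) ≠ φ_i(v) for every edge {u,v} of G. -/
/-- AG iteration preserves properness: if `φ 0` is a proper coloring and each
`φ (i+1)` is obtained from `φ i` by the Additive-Group update rule, then every
`φ i` is a proper coloring. -/
theorem stmt_0 {V : Type*} [Fintype V] (G : SimpleGraph V) (q : ℕ) (hq : q.Prime)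
    (φ : ℕ → V → ZMod q × ZMod q)
    (h0 : ∀ u v : V, G.Adj u v → φ 0 u ≠ φ 0 v)
    (hfin : ∀ (i : ℕ) (v : V), (∀ u, G.Adj v u → (φ i u).2 ≠ (φ i v).2) →
      φ (i + 1) v = (0, (φ i v).2))
    (hmove : ∀ (i : ℕ) (v : V), (∃ u, G.Adj v u ∧ (φ i u).2 = (φ i v).2) →
      φ (i + 1) v = ((φ i v).1, (φ i v).2 + (φ i v).1)) :
    ∀ (i : ℕ) (u v : V), G.Adj u v → φ i u ≠ φ i v := by
  intro i
  induction i with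
  | zero => exact h0
  | succ i ih =>
    intro u v huv hne
    by_cases hu : ∀ w, G.Adj u w → (φ i w).2 ≠ (φ i u).2
    · have hu' := hfin i u hu
      by_cases hv : ∀ w, G.Adj v w → (φ i w).2 ≠ (φ i v).2
      · have hv' := hfin i v hv
        rw [hu', hv'] at hne
        exact hu v huv (congrArg Prod.snd hne).symm
      · push_neg at hv
        obtain ⟨w, hw, hw2⟩ := hv
        have hv' := hmove i v ⟨w, hw, hw2⟩
        rw [hu', hv'] at hne
        have h1 : (0 : ZMod q) = (φ i v).1 := congrArg Prod.fst hne
        have h2 : (φ i u).2 = (φ i v).2 + (φ i v).1 := congrArg Prod.snd hne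
        rw [← h1, add_zero] at h2
        exact hu v huv h2.symm
    · push_neg at hu
      obtain ⟨w, hw, hw2⟩ := hu
      have hu' := hmove i u ⟨w, hw, hw2⟩
      by_cases hv : ∀ w, G.Adj v w → (φ i w).2 ≠ (φ i v).2
      · have hv' := hfin i v hv
        rw [hu', hv'] at hne
        have h1 : (φ i u).1 = (0 : ZMod q) := congrArg Prod.fst hne
        have h2 : (φ i u).2 + (φ i u).1 = (φ i v).2 := congrArg Prod.snd hne
        rw [h1, add_zero] at h2
        exact hv u huv.symm h2
      · push_neg at hv
        obtain ⟨w', hw', hw2'⟩ := hv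
        have hv' := hmove i v ⟨w', hw', hw2'⟩
        rw [hu', hv'] at hne
        have h1 := congrArg Prod.fst hne
        have h2 := congrArg Prod.snd hne
        simp only at h1 h2
        rw [h1] at h2
        have h3 : (φ i u).2 = (φ i v).2 := add_right_cancel h2
        exact ih u v huv (Prod.ext h1 h3)
end

section
/- Let G be a simple graph on a finite vertex set V in which every vertex has degree at most Δ, let q be a prime with q ≥ 2Δ + 1, and let φ₀, φ₁, φ₂, … be the AG iteration from a proper coloring φ₀ : V → ZMod q × ZMod q. Then the coloring φ_q (obtained after q update rounds) is proper and satisfies (φ_q(v)).1 = 0 for every vertex v; in particular, v ↦ (φ_q(v)).2 is a proper coloring of G using at most q colors. -/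
/-- After `q` rounds of the AG iteration (with `q` prime, `q ≥ 2Δ + 1`, starting
from a proper coloring), every vertex has finalized: the coloring `φ q` is proper,
all first coordinates are `0`, and the second coordinates form a proper coloring
with at most `q` colors. -/
theorem stmt_3 {V : Type*} [Fintype V] (G : SimpleGraph V) [DecidableRel G.Adj]
    (Δ q : ℕ) (hq : q.Prime) (hqΔ : 2 * Δ + 1 ≤ q)
    (hdeg : ∀ v : V, G.degree v ≤ Δ)
    (φ : ℕ → V → ZMod q × ZMod q)
    (h0 : ∀ u v : V, G.Adj u v → φ 0 u ≠ φ 0 v)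
    (hfin : ∀ (i : ℕ) (v : V), (∀ u, G.Adj v u → (φ i u).2 ≠ (φ i v).2) →
      φ (i + 1) v = (0, (φ i v).2))
    (hmove : ∀ (i : ℕ) (v : V), (∃ u, G.Adj v u ∧ (φ i u).2 = (φ i v).2) →
      φ (i + 1) v = ((φ i v).1, (φ i v).2 + (φ i v).1)) :
    (∀ v : V, (φ q v).1 = 0) ∧
    (∀ u v : V, G.Adj u v → φ q u ≠ φ q v) ∧
    (∀ u v : V, G.Adj u v → (φ q u).2 ≠ (φ q v).2) := by
  classical
  haveI : Fact q.Prime := ⟨hq⟩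
  -- the coloring stays proper (as a pair coloring) forever
  have proper : ∀ i, ∀ u v : V, G.Adj u v → φ i u ≠ φ i v := by
    intro i
    induction i with
    | zero => exact h0
    | succ i ih =>
      intro u v huv
      by_cases hu : ∃ w, G.Adj u w ∧ (φ i w).2 = (φ i u).2 <;>
        by_cases hv : ∃ w, G.Adj v w ∧ (φ i w).2 = (φ i v).2
      · rw [hmove i u hu, hmove i v hv]
        intro h
        injection h with h1 h2
        rw [h1] at h2
        exact ih u v huv (Prod.ext h1 (add_right_cancel h2))
      · push_neg at hv
        rw [hmove i u hu, hfin i v hv]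
        intro h
        injection h with h1 h2
        rw [h1, add_zero] at h2
        exact hv u huv.symm h2
      · push_neg at hu
        rw [hfin i u hu, hmove i v hv]
        intro h
        injection h with h1 h2
        rw [← h1, add_zero] at h2
        exact hu v huv h2.symm
      · push_neg at hu hv
        rw [hfin i u hu, hfin i v hv]
        intro h
        injection h with h1 h2
        exact hu v huv h2.symm
  -- once the first coordinate is zero, the coloring of that vertex is frozen
  have zero_stable : ∀ i (v : V), (φ i v).1 = 0 → φ (i + 1) v = φ i v := by
    intro i v h
    by_cases hc : ∃ u, G.Adj v u ∧ (φ i u).2 = (φ i v).2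
    · rw [hmove i v hc, h, add_zero]
      exact Prod.ext h.symm rfl
    · push_neg at hc
      rw [hfin i v hc]
      exact Prod.ext h.symm rfl
  -- once a vertex has no conflict, it is `(0, b)` forever after
  have final : ∀ (i : ℕ) (v : V), (∀ u, G.Adj v u → (φ i u).2 ≠ (φ i v).2) →
      ∀ j, i + 1 ≤ j → φ j v = (0, (φ i v).2) := by
    intro i v h j hj
    induction j with
    | zero => omega
    | succ j ih =>
      rcases Nat.lt_or_ge (i + 1) (j + 1) with hlt | hge
      · have hj' : i + 1 ≤ j := by omega
        have hφ := ih hj'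
        rw [zero_stable j v (by rw [hφ]), hφ]
      · have : i = j := by omega
        subst this
        exact hfin i v h
  have qpos : 0 < q := hq.pos
  have cast_inj : ∀ i j : ℕ, i < q → j < q → (i : ZMod q) = (j : ZMod q) → i = j := by
    intro i j hi hj h
    have := congrArg ZMod.val h
    rwa [ZMod.val_natCast_of_lt hi, ZMod.val_natCast_of_lt hj] at this
  -- main claim: every first coordinate is zero at time q
  have key : ∀ v : V, (φ q v).1 = 0 := by
    intro v
    by_contra hne
    -- then v has a conflict at every step i < q
    have hC : ∀ i, i < q → ∃ u, G.Adj v u ∧ (φ i u).2 = (φ i v).2 := by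
      intro i hi
      by_contra hc
      push_neg at hc
      have := final i v hc q (by omega)
      rw [this] at hne
      exact hne rfl
    set a := (φ 0 v).1 with ha
    set b := (φ 0 v).2 with hb
    have traj_v : ∀ i, i ≤ q → φ i v = (a, b + (i : ZMod q) * a) := by
      intro i hi
      induction i with
      | zero => exact Prod.ext rfl (by push_cast; ring)
      | succ i ih =>
        have hi' : i < q := by omega
        rw [hmove i v (hC i hi'), ih (le_of_lt hi')]
        exact Prod.ext rfl (by push_cast; ring)
    -- uniqueness of conflict times while the neighbour moves linearly
    have lin_unique : ∀ u : V, G.Adj v u → ∀ a' b' : ZMod q, ∀ i j, i < q → j < q →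
        φ i u = (a', b' + (i : ZMod q) * a') → φ j u = (a', b' + (j : ZMod q) * a') →
        (φ i u).2 = (φ i v).2 → (φ j u).2 = (φ j v).2 → i = j := by
      intro u hu a' b' i j hi hj hiu hju hic hjc
      have hvi := traj_v i hi.le
      have hvj := traj_v j hj.le
      have h1 : b' + (i : ZMod q) * a' = b + (i : ZMod q) * a := by
        rw [hiu, hvi] at hic; exact hic
      have h2 : b' + (j : ZMod q) * a' = b + (j : ZMod q) * a := by
        rw [hju, hvj] at hjc; exact hjc
      have hne' : a' ≠ a := by
        intro h'
        apply proper i u v hu.symm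
        rw [hiu, hvi]
        exact Prod.ext h' (by rw [h'] at h1 ⊢; exact h1)
      have h3 : ((i : ZMod q) - (j : ZMod q)) * (a' - a) = 0 := by
        linear_combination h1 - h2
      rcases mul_eq_zero.mp h3 with h4 | h4
      · exact cast_inj i j hi hj (sub_eq_zero.mp h4)
      · exact absurd (sub_eq_zero.mp h4) hne'
    -- uniqueness of conflict times once the neighbour is frozen
    have const_unique : ∀ u : V, G.Adj v u → ∀ c : ZMod q, ∀ i j, i < q → j < q →
        φ i u = (0, c) → φ j u = (0, c) →
        (φ i u).2 = (φ i v).2 → (φ j u).2 = (φ j v).2 → i = j := by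
      intro u hu c i j hi hj hiu hju hic hjc
      have hvi := traj_v i hi.le
      have hvj := traj_v j hj.le
      have h1 : c = b + (i : ZMod q) * a := by rw [hiu, hvi] at hic; exact hic
      have h2 : c = b + (j : ZMod q) * a := by rw [hju, hvj] at hjc; exact hjc
      by_cases haz : a = 0
      · exact absurd (by rw [hiu, hvi]; exact Prod.ext haz.symm h1) (proper i u v hu.symm)
      · have h3 : ((i : ZMod q) - (j : ZMod q)) * a = 0 := by linear_combination h2 - h1
        rcases mul_eq_zero.mp h3 with h4 | h4
        · exact cast_inj i j hi hj (sub_eq_zero.mp h4)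
        · exact absurd h4 haz
    -- each neighbour conflicts with v at most twice among the first q rounds
    have S_bound : ∀ u : V, G.Adj v u →
        ((Finset.range q).filter fun i => (φ i u).2 = (φ i v).2).card ≤ 2 := by
      intro u hu
      set S := (Finset.range q).filter fun i => (φ i u).2 = (φ i v).2 with hS
      have memS : ∀ i, i ∈ S → i < q ∧ (φ i u).2 = (φ i v).2 := by
        intro i hi
        rw [hS, Finset.mem_filter, Finset.mem_range] at hi
        exact hi
      by_cases hT : ∃ T, T < q ∧ ∀ w, G.Adj u w → (φ T w).2 ≠ (φ T u).2
      · -- u finalizes; take the least such time T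
        have hTf := Nat.find_spec hT
        set T := Nat.find hT with hTdef
        obtain ⟨hTq, hTfin⟩ := hTf
        have hmin : ∀ i, i < T → ∃ w, G.Adj u w ∧ (φ i w).2 = (φ i u).2 := by
          intro i hiT
          have := Nat.find_min hT hiT
          rw [not_and_or] at this
          rcases this with h | h
          · omega
          · push_neg at h
            obtain ⟨w, hw1, hw2⟩ := h
            exact ⟨w, hw1, hw2⟩
        -- linear trajectory up to time T
        have traj_u : ∀ i, i ≤ T → φ i u = ((φ 0 u).1, (φ 0 u).2 + (i : ZMod q) * (φ 0 u).1) := by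
          intro i hi
          induction i with
          | zero =>
            exact Prod.ext rfl (by push_cast; ring)
          | succ i ih =>
            have hi' : i < T := by omega
            rw [hmove i u (hmin i hi'), ih (le_of_lt hi')]
            exact Prod.ext rfl (by push_cast; ring)
        -- frozen after time T
        have frozen : ∀ i, T + 1 ≤ i → φ i u = (0, (φ T u).2) := final T u hTfin
        -- T itself is not a conflict time with v
        have hTnot : T ∉ S := by
          intro hTS
          exact hTfin v hu.symm (memS T hTS).2.symm
        have split : (S.filter fun i => i < T).card + (S.filter fun i => ¬ i < T).card
            = S.card := by
          simpa using Finset.card_filter_add_card_filter_not (s := S)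
            (p := fun i => i < T)
        have c1 : (S.filter fun i => i < T).card ≤ 1 := by
          rw [Finset.card_le_one]
          intro i hi j hj
          rw [Finset.mem_filter] at hi hj
          obtain ⟨hiS, hiT⟩ := hi
          obtain ⟨hjS, hjT⟩ := hj
          obtain ⟨hiq, hic⟩ := memS i hiS
          obtain ⟨hjq, hjc⟩ := memS j hjS
          exact lin_unique u hu _ _ i j hiq hjq (traj_u i hiT.le) (traj_u j hjT.le) hic hjc
        have c2 : (S.filter fun i => ¬ i < T).card ≤ 1 := by
          rw [Finset.card_le_one]
          intro i hi j hj
          rw [Finset.mem_filter] at hi hj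
          obtain ⟨hiS, hiT⟩ := hi
          obtain ⟨hjS, hjT⟩ := hj
          obtain ⟨hiq, hic⟩ := memS i hiS
          obtain ⟨hjq, hjc⟩ := memS j hjS
          have hiT' : T + 1 ≤ i := by
            rcases Nat.lt_or_ge T i with h | h
            · omega
            · have : i = T := by omega
              subst this
              exact absurd hiS hTnot
          have hjT' : T + 1 ≤ j := by
            rcases Nat.lt_or_ge T j with h | h
            · omega
            · have : j = T := by omega
              subst this
              exact absurd hjS hTnot
          exact const_unique u hu _ i j hiq hjq (frozen i hiT') (frozen j hjT') hic hjc
        omega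
      · -- u never finalizes before q: linear trajectory throughout
        push_neg at hT
        have hmin : ∀ i, i < q → ∃ w, G.Adj u w ∧ (φ i w).2 = (φ i u).2 := by
          intro i hi
          have := hT i hi
          obtain ⟨w, hw1, hw2⟩ := this
          exact ⟨w, hw1, hw2⟩
        have traj_u : ∀ i, i ≤ q → φ i u = ((φ 0 u).1, (φ 0 u).2 + (i : ZMod q) * (φ 0 u).1) := by
          intro i hi
          induction i with
          | zero => exact Prod.ext rfl (by push_cast; ring)
          | succ i ih =>
            have hi' : i < q := by omega
            rw [hmove i u (hmin i hi'), ih (le_of_lt hi')]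
            exact Prod.ext rfl (by push_cast; ring)
        have : S.card ≤ 1 := by
          rw [Finset.card_le_one]
          intro i hi j hj
          obtain ⟨hiq, hic⟩ := memS i hi
          obtain ⟨hjq, hjc⟩ := memS j hj
          exact lin_unique u hu _ _ i j hiq hjq (traj_u i hiq.le) (traj_u j hjq.le) hic hjc
        omega
    -- counting: q rounds of conflicts among ≤ Δ neighbours, each used ≤ 2 times
    have hC' : ∀ i : ℕ, ∃ u : V, i < q → G.Adj v u ∧ (φ i u).2 = (φ i v).2 := by
      intro i
      by_cases h : i < q
      · obtain ⟨u, hu⟩ := hC i h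
        exact ⟨u, fun _ => hu⟩
      · exact ⟨v, fun h' => absurd h' h⟩
    choose f hf using hC'
    have hmaps : ∀ i ∈ Finset.range q, f i ∈ G.neighborFinset v := by
      intro i hi
      rw [SimpleGraph.mem_neighborFinset]
      exact (hf i (Finset.mem_range.mp hi)).1
    have hcard : (Finset.range q).card ≤ 2 * (G.neighborFinset v).card := by
      apply Finset.card_le_mul_card_image_of_maps_to hmaps
      intro u hu'
      by_cases hadj : G.Adj v u
      · refine le_trans (Finset.card_le_card ?_) (S_bound u hadj)
        intro i hi
        rw [Finset.mem_filter] at hi ⊢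
        obtain ⟨hir, hifu⟩ := hi
        refine ⟨hir, ?_⟩
        have := (hf i (Finset.mem_range.mp hir)).2
        rwa [hifu] at this
      · have : ((Finset.range q).filter fun i => f i = u).card = 0 := by
          rw [Finset.card_eq_zero, Finset.filter_eq_empty_iff]
          intro i hi hfi
          exact hadj (hfi ▸ (hf i (Finset.mem_range.mp hi)).1)
        omega
    rw [Finset.card_range] at hcard
    have : (G.neighborFinset v).card ≤ Δ := by
      rw [SimpleGraph.card_neighborFinset_eq_degree]
      exact hdeg v
    omega
  refine ⟨key, proper q, ?_⟩
  intro u v huv h2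
  exact proper q u v huv (Prod.ext (by rw [key u, key v]) h2)
end

section
/- Let G be a simple graph on a finite vertex set V in which every vertex has degree at most Δ, let q be a prime with Δ < q, and let φ₀, φ₁, φ₂, … be the AG iteration from a proper coloring φ₀ : V → ZMod q × ZMod q. Suppose a vertex v satisfies (φ_i(v)).1 ≠ 0 for every i with s ≤ i ≤ s + q (i.e., v does not finalize during the window of q rounds starting at round s). Then the number of neighbors u of v with (φ_s(u)).1 ≠ 0 and (φ_{s+q}(u)).1 = 0 is at least q − Δ. -/
/-- If a vertex `v` does not finalize during a window of `q` consecutive rounds of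
the AG iteration (with `q` prime, `Δ < q`), then at least `q - Δ` of its neighbors
finalize during that window. -/
theorem stmt_4 {V : Type*} [Fintype V] (G : SimpleGraph V) [DecidableRel G.Adj]
    (Δ q : ℕ) (hq : q.Prime) (hΔq : Δ < q)
    (hdeg : ∀ v : V, G.degree v ≤ Δ)
    (φ : ℕ → V → ZMod q × ZMod q)
    (h0 : ∀ u v : V, G.Adj u v → φ 0 u ≠ φ 0 v)
    (hfin : ∀ (i : ℕ) (v : V), (∀ u, G.Adj v u → (φ i u).2 ≠ (φ i v).2) →
      φ (i + 1) v = (0, (φ i v).2))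
    (hmove : ∀ (i : ℕ) (v : V), (∃ u, G.Adj v u ∧ (φ i u).2 = (φ i v).2) →
      φ (i + 1) v = ((φ i v).1, (φ i v).2 + (φ i v).1))
    (s : ℕ) (v : V)
    (hv : ∀ i : ℕ, s ≤ i → i ≤ s + q → (φ i v).1 ≠ 0) :
    q - Δ ≤ ((G.neighborFinset v).filter
      (fun u => (φ s u).1 ≠ 0 ∧ (φ (s + q) u).1 = 0)).card := by
  classical
  haveI : Fact q.Prime := ⟨hq⟩
  -- each step is one of two kinds
  have step : ∀ (i : ℕ) (w : V), φ (i+1) w = (0, (φ i w).2) ∨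
      φ (i+1) w = ((φ i w).1, (φ i w).2 + (φ i w).1) := by
    intro i w
    by_cases h : ∃ u, G.Adj w u ∧ (φ i u).2 = (φ i w).2
    · exact Or.inr (hmove i w h)
    · push_neg at h
      exact Or.inl (hfin i w h)
  -- properness is preserved
  have proper : ∀ (i : ℕ) (u w : V), G.Adj u w → φ i u ≠ φ i w := by
    intro i
    induction i with
    | zero => exact h0
    | succ i ih =>
      intro u w hadj heq
      by_cases hu : ∃ x, G.Adj u x ∧ (φ i x).2 = (φ i u).2 <;>
      by_cases hw : ∃ x, G.Adj w x ∧ (φ i x).2 = (φ i w).2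
      · rw [hmove i u hu, hmove i w hw, Prod.mk.injEq] at heq
        exact ih u w hadj (Prod.ext heq.1 (by
          have h2 := heq.2; rw [heq.1] at h2; exact add_right_cancel h2))
      · push_neg at hw
        rw [hmove i u hu, hfin i w hw, Prod.mk.injEq] at heq
        exact hw u hadj.symm (by rw [← heq.2, heq.1, add_zero])
      · push_neg at hu
        rw [hfin i u hu, hmove i w hw, Prod.mk.injEq] at heq
        exact hu w hadj (by rw [heq.2, ← heq.1, add_zero])
      · push_neg at hu
        push_neg at hw
        rw [hfin i u hu, hfin i w hw, Prod.mk.injEq] at heq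
        exact hu w hadj heq.2.symm
  -- if the first coordinate is zero, the color freezes
  have frozen_step : ∀ (i : ℕ) (w : V), (φ i w).1 = 0 → φ (i+1) w = φ i w := by
    intro i w h
    have : φ (i+1) w = ((φ i w).1, (φ i w).2) := by
      rcases step i w with h' | h' <;> rw [h'] <;> simp [h]
    exact this
  have frozen : ∀ (i j : ℕ) (w : V), i ≤ j → (φ i w).1 = 0 → φ j w = φ i w := by
    intro i j w hij h0'
    induction j, hij using Nat.le_induction with
    | base => rfl
    | succ j hij ih => rw [frozen_step j w (by rw [ih]; exact h0'), ih]
  have zero_persist : ∀ (i j : ℕ) (w : V), i ≤ j → (φ i w).1 = 0 →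
      (φ j w).1 = 0 := by
    intro i j w hij h0'
    rw [frozen i j w hij h0']; exact h0'
  -- a step that keeps the first coordinate nonzero must be a move
  have active_step : ∀ (i : ℕ) (w : V), (φ (i+1) w).1 ≠ 0 →
      φ (i+1) w = ((φ i w).1, (φ i w).2 + (φ i w).1) := by
    intro i w h
    rcases step i w with h' | h'
    · exact absurd (by rw [h']) h
    · exact h'
  -- trajectory while active
  have traj : ∀ (w : V) (k : ℕ), (∀ j, j ≤ k → (φ (s+j) w).1 ≠ 0) →
      φ (s+k) w = ((φ s w).1, (φ s w).2 + (k : ZMod q) * (φ s w).1) := by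
    intro w k
    induction k with
    | zero => intro _; simp
    | succ k ih =>
      intro h
      have h1 : (φ (s+k+1) w).1 ≠ 0 := h (k+1) le_rfl
      have h2 := active_step (s+k) w h1
      have h3 := ih (fun j hj => h j (le_trans hj (Nat.le_succ k)))
      show φ (s+k+1) w = _
      rw [h2, h3]
      refine Prod.ext rfl ?_
      show _ = _
      push_cast
      ring
  have castinj : ∀ k1 k2 : ℕ, k1 < q → k2 < q → ((k1 : ZMod q) = k2) → k1 = k2 := by
    intro k1 k2 h1 h2 h
    have := (ZMod.natCast_eq_natCast_iff k1 k2 q).mp h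
    rwa [Nat.ModEq, Nat.mod_eq_of_lt h1, Nat.mod_eq_of_lt h2] at this
  set a := (φ s v).1 with ha_def
  set b := (φ s v).2 with hb_def
  have ha : a ≠ 0 := hv s le_rfl (Nat.le_add_right s q)
  have hvtraj : ∀ k, k ≤ q → φ (s+k) v = (a, b + (k : ZMod q) * a) :=
    fun k hk => traj v k (fun j hj => hv (s+j) (Nat.le_add_right s j) (by omega))
  -- collision sets
  set C : V → Finset ℕ := fun u =>
    (Finset.range q).filter (fun k => (φ (s+k) u).2 = (φ (s+k) v).2) with hC_def
  -- every round has a collision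
  have exCol : ∀ k, k < q → ∃ u ∈ G.neighborFinset v, k ∈ C u := by
    intro k hk
    by_contra hcon
    push_neg at hcon
    have hno : ∀ u, G.Adj v u → (φ (s+k) u).2 ≠ (φ (s+k) v).2 := by
      intro u hu heq
      exact absurd (Finset.mem_filter.mpr ⟨Finset.mem_range.mpr hk, heq⟩)
        (hcon u (by rwa [SimpleGraph.mem_neighborFinset]))
    have := hfin (s+k) v hno
    have hz : (φ (s+k+1) v).1 = 0 := by rw [this]
    exact hv (s+k+1) (by omega) (by omega) hz
  -- q ≤ total number of collisions
  have hcover : Finset.range q ⊆ (G.neighborFinset v).biUnion C := by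
    intro k hk
    obtain ⟨u, hu, hku⟩ := exCol k (Finset.mem_range.mp hk)
    exact Finset.mem_biUnion.mpr ⟨u, hu, hku⟩
  have hqsum : q ≤ ∑ u ∈ G.neighborFinset v, (C u).card := by
    calc q = (Finset.range q).card := (Finset.card_range q).symm
    _ ≤ ((G.neighborFinset v).biUnion C).card := Finset.card_le_card hcover
    _ ≤ ∑ u ∈ G.neighborFinset v, (C u).card := Finset.card_biUnion_le
  -- at most one collision while frozen from time t on
  have frozenBound : ∀ (u : V) (t : ℕ), (φ (s+t) u).1 = 0 →
      ((C u).filter (fun k => t ≤ k)).card ≤ 1 := by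
    intro u t ht
    refine Finset.card_le_one.mpr ?_
    intro k1 hk1 k2 hk2
    simp only [Finset.mem_filter, hC_def, Finset.mem_range] at hk1 hk2
    obtain ⟨⟨hk1q, hk1c⟩, hk1t⟩ := hk1
    obtain ⟨⟨hk2q, hk2c⟩, hk2t⟩ := hk2
    rw [frozen (s+t) (s+k1) u (by omega) ht, hvtraj k1 (by omega)] at hk1c
    rw [frozen (s+t) (s+k2) u (by omega) ht, hvtraj k2 (by omega)] at hk2c
    have : (k1 : ZMod q) * a = (k2 : ZMod q) * a := by
      have := hk1c.symm.trans hk2c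
      simpa using this
    exact castinj k1 k2 hk1q hk2q (mul_right_cancel₀ ha this)
  -- at most one collision while active (before time t)
  have activeBound : ∀ (u : V), G.Adj v u → ∀ t : ℕ, t ≤ q →
      (∀ j, j < t → (φ (s+j) u).1 ≠ 0) →
      ((C u).filter (fun k => k < t)).card ≤ 1 := by
    intro u hadj t htq hact
    refine Finset.card_le_one.mpr ?_
    intro k1 hk1 k2 hk2
    simp only [Finset.mem_filter, hC_def, Finset.mem_range] at hk1 hk2
    obtain ⟨⟨hk1q, hk1c⟩, hk1t⟩ := hk1
    obtain ⟨⟨hk2q, hk2c⟩, hk2t⟩ := hk2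
    rw [traj u k1 (fun j hj => hact j (by omega)), hvtraj k1 (by omega)] at hk1c
    rw [traj u k2 (fun j hj => hact j (by omega)), hvtraj k2 (by omega)] at hk2c
    by_cases haa : (φ s u).1 = a
    · exfalso
      rw [haa] at hk1c
      have hbb : (φ s u).2 = b := add_right_cancel hk1c
      exact proper s u v hadj.symm (Prod.ext (by rw [haa, ha_def]) (by rw [hbb, hb_def]))
    · have hz : ((k1 : ZMod q) - (k2 : ZMod q)) * ((φ s u).1 - a) = 0 := by
        linear_combination hk1c - hk2c
      rcases mul_eq_zero.mp hz with h | h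
      · exact castinj k1 k2 hk1q hk2q (sub_eq_zero.mp h)
      · exact absurd (sub_eq_zero.mp h) haa
  -- final counting
  set P : V → Prop := fun u => (φ s u).1 ≠ 0 ∧ (φ (s + q) u).1 = 0 with hP_def
  have goodBound : ∀ u ∈ G.neighborFinset v, P u → (C u).card ≤ 2 := by
    intro u hu hPu
    have hadj : G.Adj v u := by rwa [SimpleGraph.mem_neighborFinset] at hu
    have hex : ∃ k, (φ (s+k) u).1 = 0 := ⟨q, hPu.2⟩
    set t := Nat.find hex with ht_def
    have htz : (φ (s+t) u).1 = 0 := Nat.find_spec hex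
    have htq : t ≤ q := Nat.find_le hPu.2
    have hact : ∀ j, j < t → (φ (s+j) u).1 ≠ 0 := fun j hj => Nat.find_min hex hj
    have hsplit : (C u).card = ((C u).filter (fun k => k < t)).card
        + ((C u).filter (fun k => ¬ k < t)).card :=
      (Finset.card_filter_add_card_filter_not (fun k => k < t)).symm
    have h2 : ((C u).filter (fun k => ¬ k < t)).card
        = ((C u).filter (fun k => t ≤ k)).card := by
      congr 1
      apply Finset.filter_congr
      intro k _
      simp [Nat.not_lt]
    rw [hsplit, h2]
    have := activeBound u hadj t htq hact
    have := frozenBound u t htz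
    omega
  have badBound : ∀ u ∈ G.neighborFinset v, ¬ P u → (C u).card ≤ 1 := by
    intro u hu hPu
    have hadj : G.Adj v u := by rwa [SimpleGraph.mem_neighborFinset] at hu
    by_cases h0u : (φ s u).1 = 0
    · have : (C u) = (C u).filter (fun k => 0 ≤ k) := by
        rw [Finset.filter_true_of_mem (fun k _ => Nat.zero_le k)]
      rw [this]
      exact frozenBound u 0 (by simpa using h0u)
    · have hnz : (φ (s+q) u).1 ≠ 0 := fun h => hPu ⟨h0u, h⟩
      have hact : ∀ j, j < q → (φ (s+j) u).1 ≠ 0 := by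
        intro j hj hz
        exact hnz (zero_persist (s+j) (s+q) u (by omega) hz)
      have : (C u) = (C u).filter (fun k => k < q) := by
        rw [Finset.filter_true_of_mem]
        intro k hk
        rw [hC_def] at hk
        exact Finset.mem_range.mp (Finset.mem_filter.mp hk).1
      rw [this]
      exact activeBound u hadj q le_rfl hact
  -- put it together
  set N := G.neighborFinset v with hN_def
  have hsum : ∑ u ∈ N, (C u).card
      = ∑ u ∈ N.filter P, (C u).card + ∑ u ∈ N.filter (fun u => ¬ P u), (C u).card :=
    (Finset.sum_filter_add_sum_filter_not N P _).symm
  have hgoodsum : ∑ u ∈ N.filter P, (C u).card ≤ (N.filter P).card * 2 := by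
    calc ∑ u ∈ N.filter P, (C u).card ≤ ∑ _u ∈ N.filter P, 2 :=
      Finset.sum_le_sum (fun u hu => goodBound u (Finset.mem_of_mem_filter u hu)
        (Finset.mem_filter.mp hu).2)
    _ = (N.filter P).card * 2 := by rw [Finset.sum_const, smul_eq_mul]
  have hbadsum : ∑ u ∈ N.filter (fun u => ¬ P u), (C u).card
      ≤ (N.filter (fun u => ¬ P u)).card := by
    calc ∑ u ∈ N.filter (fun u => ¬ P u), (C u).card
        ≤ ∑ _u ∈ N.filter (fun u => ¬ P u), 1 :=
      Finset.sum_le_sum (fun u hu => badBound u (Finset.mem_of_mem_filter u hu)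
        (Finset.mem_filter.mp hu).2)
    _ = _ := by rw [Finset.sum_const, smul_eq_mul, mul_one]
  have hcards : (N.filter P).card + (N.filter (fun u => ¬ P u)).card = N.card :=
    Finset.card_filter_add_card_filter_not P
  have hNdeg : N.card ≤ Δ := by
    rw [hN_def, SimpleGraph.card_neighborFinset_eq_degree]
    exact hdeg v
  have hfilter_eq : (N.filter (fun u => (φ s u).1 ≠ 0 ∧ (φ (s + q) u).1 = 0)).card
      = (N.filter P).card := by
    congr 1
  rw [show ((G.neighborFinset v).filter
      (fun u => (φ s u).1 ≠ 0 ∧ (φ (s + q) u).1 = 0)) =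
      (N.filter (fun u => (φ s u).1 ≠ 0 ∧ (φ (s + q) u).1 = 0)) from rfl]
  rw [hfilter_eq]
  omega
end

section
/- Let ε > 0 be a real number, let G be a simple graph on a finite vertex set V in which every vertex has degree at most Δ, and let q be a prime with Δ < q and (q : ℝ) ≥ (1 + ε)·Δ. Let φ₀, φ₁, φ₂, … be the AG iteration from a proper coloring φ₀ : V → ZMod q × ZMod q, and set T = (1 + ⌈1/ε⌉)·q. Then every vertex v satisfies (φ_T(v)).1 = 0; in particular, φ_T is a proper coloring of G using at most q colors. -/
lemma ap_count {q : ℕ} (hq : q.Prime) (d e : ZMod q) (hd : d ≠ 0)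
    (s L : ℕ) :
    ((Finset.Ico s (s + L)).filter (fun (i : ℕ) => e + (i : ZMod q) * d = 0)).card
      ≤ (L - 1) / q + 1 := by
  haveI : Fact q.Prime := ⟨hq⟩
  classical
  have := Finset.card_le_card_of_injOn (fun i => (i - s) / q)
    (s := (Finset.Ico s (s + L)).filter (fun (i : ℕ) => e + (i : ZMod q) * d = 0))
    (t := Finset.range ((L - 1) / q + 1)) ?_ ?_
  · simpa using this
  · intro i hi
    simp only [Finset.mem_coe, Finset.mem_filter, Finset.coe_filter, Set.mem_setOf_eq, Finset.mem_Ico] at hi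
    simp only [Finset.mem_coe, Finset.mem_range]
    have h1 : (i - s) / q ≤ (L - 1) / q := Nat.div_le_div_right (by omega)
    omega
  · intro i hi j hj hij
    simp only [Finset.coe_filter, Set.mem_setOf_eq, Finset.mem_Ico] at hi hj
    have h1 : (i : ZMod q) * d = (j : ZMod q) * d := by
      linear_combination hi.2 - hj.2
    have h2 : (i : ZMod q) = (j : ZMod q) := mul_right_cancel₀ hd h1
    have h3 : i ≡ j [MOD q] := (ZMod.natCast_eq_natCast_iff _ _ _).mp h2
    have hdvd : (q : ℤ) ∣ (j : ℤ) - (i : ℤ) := (Nat.modEq_iff_dvd).mp h3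
    have h4 : (i - s) ≡ (j - s) [MOD q] := by
      rw [Nat.modEq_iff_dvd]
      have hsi : s ≤ i := hi.1.1
      have hsj : s ≤ j := hj.1.1
      push_cast [Nat.cast_sub hsi, Nat.cast_sub hsj]
      convert hdvd using 1
      ring
    have e1 := Nat.div_add_mod (i - s) q
    have e2 := Nat.div_add_mod (j - s) q
    simp only at hij
    have h5 : i - s = j - s := by
      rw [← e1, ← e2, hij, h4]
    have hsi : s ≤ i := hi.1.1
    have hsj : s ≤ j := hj.1.1
    omega

lemma div_add_div_le (x y q : ℕ) : x / q + y / q ≤ (x + y) / q := by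
  rcases Nat.eq_zero_or_pos q with h | h
  · simp [h]
  · rw [Nat.le_div_iff_mul_le h, add_mul]
    exact Nat.add_le_add (Nat.div_mul_le_self x q) (Nat.div_mul_le_self y q)

/-- With a smaller palette `q ≥ (1 + ε)Δ`, running the AG iteration for
`T = (1 + ⌈1/ε⌉)·q` rounds finalizes all vertices: all first coordinates of `φ T`
are `0`, and `φ T` is a proper coloring using at most `q` colors. -/
theorem stmt_5 {V : Type*} [Fintype V] (G : SimpleGraph V) [DecidableRel G.Adj]
    (ε : ℝ) (hε : 0 < ε)
    (Δ q : ℕ) (hq : q.Prime) (hΔq : Δ < q)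
    (hqε : (q : ℝ) ≥ (1 + ε) * Δ)
    (hdeg : ∀ v : V, G.degree v ≤ Δ)
    (φ : ℕ → V → ZMod q × ZMod q)
    (h0 : ∀ u v : V, G.Adj u v → φ 0 u ≠ φ 0 v)
    (hfin : ∀ (i : ℕ) (v : V), (∀ u, G.Adj v u → (φ i u).2 ≠ (φ i v).2) →
      φ (i + 1) v = (0, (φ i v).2))
    (hmove : ∀ (i : ℕ) (v : V), (∃ u, G.Adj v u ∧ (φ i u).2 = (φ i v).2) →
      φ (i + 1) v = ((φ i v).1, (φ i v).2 + (φ i v).1)) :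
    (∀ v : V, (φ ((1 + ⌈1 / ε⌉₊) * q) v).1 = 0) ∧
    (∀ u v : V, G.Adj u v → φ ((1 + ⌈1 / ε⌉₊) * q) u ≠ φ ((1 + ⌈1 / ε⌉₊) * q) v) := by
  classical
  haveI : Fact q.Prime := ⟨hq⟩
  have hq2 : 2 ≤ q := hq.two_le
  set K : ℕ := 1 + ⌈1 / ε⌉₊ with hK
  have hK1 : 1 ≤ K := by omega
  set T : ℕ := K * q with hT
  -- once the first coordinate is 0, the color never changes
  have frozen : ∀ (u : V) (i : ℕ), (φ i u).1 = 0 → ∀ j, i ≤ j → φ j u = φ i u := by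
    intro u i h0u j hij
    induction j with
    | zero =>
      have : i = 0 := by omega
      subst this; rfl
    | succ j ih =>
      rcases Nat.lt_or_ge i (j + 1) with h | h
      · have hphi := ih (by omega)
        by_cases hc : ∀ w, G.Adj u w → (φ j w).2 ≠ (φ j u).2
        · rw [hfin j u hc, hphi]
          rw [Prod.ext_iff]
          exact ⟨h0u.symm, rfl⟩
        · push_neg at hc
          rw [hmove j u hc, hphi]
          rw [Prod.ext_iff]
          exact ⟨rfl, by rw [h0u, add_zero]⟩
      · have : i = j + 1 := by omega
        subst this; rfl
  -- properness is preserved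
  have proper : ∀ i (u v : V), G.Adj u v → φ i u ≠ φ i v := by
    intro i
    induction i with
    | zero => exact h0
    | succ i ih =>
      intro u v huv heq
      by_cases hu : ∀ w, G.Adj u w → (φ i w).2 ≠ (φ i u).2
      · have hu' := hfin i u hu
        by_cases hv : ∀ w, G.Adj v w → (φ i w).2 ≠ (φ i v).2
        · have hv' := hfin i v hv
          rw [hu', hv', Prod.ext_iff] at heq
          exact hu v huv heq.2.symm
        · push_neg at hv
          have hv' := hmove i v hv
          rw [hu', hv', Prod.ext_iff] at heq
          have h2 : (φ i u).2 = (φ i v).2 := by rw [heq.2, ← heq.1, add_zero]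
          exact hu v huv h2.symm
      · push_neg at hu
        have hu' := hmove i u hu
        by_cases hv : ∀ w, G.Adj v w → (φ i w).2 ≠ (φ i v).2
        · have hv' := hfin i v hv
          rw [hu', hv', Prod.ext_iff] at heq
          have h2 : (φ i u).2 = (φ i v).2 := by rw [← heq.2, heq.1, add_zero]
          exact hv u huv.symm h2
        · push_neg at hv
          have hv' := hmove i v hv
          rw [hu', hv', Prod.ext_iff] at heq
          refine ih u v huv (Prod.ext_iff.mpr ⟨heq.1, ?_⟩)
          have h2 := heq.2
          rw [heq.1] at h2
          exact add_right_cancel h2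
  refine ⟨?_, fun u v h => proper T u v h⟩
  intro v
  by_contra ha
  -- v has a conflict at every step before T
  have hCv : ∀ i, i < T → ∃ u, G.Adj v u ∧ (φ i u).2 = (φ i v).2 := by
    intro i hi
    by_contra h
    push_neg at h
    have h1 := hfin i v h
    have h2 : (φ (i + 1) v).1 = 0 := by rw [h1]
    have h3 := frozen v (i + 1) h2 T (by omega)
    rw [h3] at ha
    exact ha h2
  set a := (φ 0 v).1 with hadef
  set b := (φ 0 v).2 with hbdef
  have trajv : ∀ i, i ≤ T → φ i v = (a, b + (i : ZMod q) * a) := by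
    intro i
    induction i with
    | zero => intro _; simp [hadef, hbdef]
    | succ i ih =>
      intro h
      have h1 := hmove i v (hCv i (by omega))
      rw [ih (by omega)] at h1
      rw [h1, Prod.ext_iff]
      exact ⟨rfl, by push_cast; ring⟩
  have ha0 : a ≠ 0 := by
    intro h
    apply ha
    rw [trajv T le_rfl, h]
  -- each neighbor can block v at most K+1 times
  have key : ∀ u : V, G.Adj v u →
      ((Finset.range T).filter (fun i => (φ i u).2 = (φ i v).2)).card ≤ K + 1 := by
    intro u hadj
    set c := (φ 0 u).1 with hcdef
    set bu := (φ 0 u).2 with hbudef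
    have hP : ∃ i, (∀ w, G.Adj u w → (φ i w).2 ≠ (φ i u).2) ∨ i = T := ⟨T, Or.inr rfl⟩
    set t := Nat.find hP with htdef
    have htT : t ≤ T := Nat.find_le (Or.inr rfl)
    have hconf : ∀ i, i < t → ∃ w, G.Adj u w ∧ (φ i w).2 = (φ i u).2 := by
      intro i hi
      have h1 := Nat.find_min hP hi
      push_neg at h1
      exact h1.1
    have traju : ∀ i, i ≤ t → φ i u = (c, bu + (i : ZMod q) * c) := by
      intro i
      induction i with
      | zero => intro _; simp [hcdef, hbudef]
      | succ i ih =>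
        intro h
        have h1 := hmove i u (hconf i (by omega))
        rw [ih (by omega)] at h1
        rw [h1, Prod.ext_iff]
        exact ⟨rfl, by push_cast; ring⟩
    have frozenu : ∀ i, t ≤ i → i ≤ T → (φ i u).2 = bu + (t : ZMod q) * c := by
      intro i h1 h2
      rcases Nat.eq_or_lt_of_le h1 with h3 | h3
      · rw [← h3, traju t le_rfl]
      · have ht' : t ≠ T := by omega
        have hnc : ∀ w, G.Adj u w → (φ t w).2 ≠ (φ t u).2 :=
          (Nat.find_spec hP).resolve_right ht'
        have h4 := hfin t u hnc
        have h5 : (φ (t + 1) u).1 = 0 := by rw [h4]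
        have h6 := frozen u (t + 1) h5 i (by omega)
        rw [h6, h4, traju t le_rfl]
    have hsub : (Finset.range T).filter (fun i => (φ i u).2 = (φ i v).2) ⊆
        ((Finset.Ico 0 t).filter (fun (i : ℕ) => (bu - b) + (i : ZMod q) * (c - a) = 0)) ∪
        ((Finset.Ico t T).filter
          (fun (i : ℕ) => (b - (bu + (t : ZMod q) * c)) + (i : ZMod q) * a = 0)) := by
      intro i hi
      simp only [Finset.mem_filter, Finset.mem_range] at hi
      obtain ⟨hiT, hieq⟩ := hi
      rcases lt_or_ge i t with h | h
      · apply Finset.mem_union_left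
        simp only [Finset.mem_filter, Finset.mem_Ico]
        refine ⟨⟨Nat.zero_le _, h⟩, ?_⟩
        have e1 : (φ i u).2 = bu + (i : ZMod q) * c := by rw [traju i h.le]
        have e2 : (φ i v).2 = b + (i : ZMod q) * a := by rw [trajv i hiT.le]
        rw [e1, e2] at hieq
        linear_combination hieq
      · apply Finset.mem_union_right
        simp only [Finset.mem_filter, Finset.mem_Ico]
        refine ⟨⟨h, hiT⟩, ?_⟩
        have e1 : (φ i u).2 = bu + (t : ZMod q) * c := frozenu i h hiT.le
        have e2 : (φ i v).2 = b + (i : ZMod q) * a := by rw [trajv i hiT.le]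
        rw [e1, e2] at hieq
        linear_combination -hieq
    have hcard := (Finset.card_le_card hsub).trans (Finset.card_union_le _ _)
    have hS2 : ((Finset.Ico t T).filter
        (fun (i : ℕ) => (b - (bu + (t : ZMod q) * c)) + (i : ZMod q) * a = 0)).card
        ≤ (T - t - 1) / q + 1 := by
      have h1 := ap_count hq a (b - (bu + (t : ZMod q) * c)) ha0 t (T - t)
      rwa [Nat.add_sub_cancel' htT] at h1
    by_cases hca : c - a = 0
    · have hS1 : ((Finset.Ico 0 t).filter
          (fun (i : ℕ) => (bu - b) + (i : ZMod q) * (c - a) = 0)).card = 0 := by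
        rw [Finset.card_eq_zero, Finset.filter_eq_empty_iff]
        intro i _
        rw [hca, mul_zero, add_zero]
        intro hbb
        apply h0 u v hadj.symm
        rw [Prod.ext_iff]
        constructor
        · rw [← hcdef, ← hadef]; exact sub_eq_zero.mp hca
        · rw [← hbudef, ← hbdef]; exact sub_eq_zero.mp hbb
      have h2 : (T - t - 1) / q ≤ K := by
        have h3 : (T - t - 1) / q ≤ T / q := Nat.div_le_div_right (by omega)
        have h4 : T / q = K := by rw [hT]; exact Nat.mul_div_cancel K (by omega)
        omega
      omega
    · have hS1 : ((Finset.Ico 0 t).filter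
          (fun (i : ℕ) => (bu - b) + (i : ZMod q) * (c - a) = 0)).card
          ≤ (t - 1) / q + 1 := by
        have h1 := ap_count hq (c - a) (bu - b) hca 0 t
        simpa using h1
      have h2 : (t - 1) / q + (T - t - 1) / q ≤ K - 1 := by
        have h3 : (t - 1) / q + (T - t - 1) / q ≤ ((t - 1) + (T - t - 1)) / q :=
          div_add_div_le _ _ _
        have h4 : ((t - 1) + (T - t - 1)) / q ≤ (T - 1) / q :=
          Nat.div_le_div_right (by omega)
        have h5 : (T - 1) / q < K := by
          rw [Nat.div_lt_iff_lt_mul (by omega)]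
          have : 1 ≤ T := by
            calc 1 ≤ q := by omega
            _ = 1 * q := (one_mul q).symm
            _ ≤ K * q := Nat.mul_le_mul_right q hK1
          omega
        omega
      omega
  -- cover all times by blocking neighbors
  have cover : Finset.range T ⊆ (G.neighborFinset v).biUnion
      (fun u => (Finset.range T).filter (fun i => (φ i u).2 = (φ i v).2)) := by
    intro i hi
    obtain ⟨u, h1, h2⟩ := hCv i (Finset.mem_range.mp hi)
    exact Finset.mem_biUnion.mpr ⟨u, (SimpleGraph.mem_neighborFinset _ _ _).mpr h1,
      Finset.mem_filter.mpr ⟨hi, h2⟩⟩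
  have hTle : T ≤ Δ * (K + 1) := by
    calc T = (Finset.range T).card := (Finset.card_range T).symm
    _ ≤ ((G.neighborFinset v).biUnion
        (fun u => (Finset.range T).filter (fun i => (φ i u).2 = (φ i v).2))).card :=
      Finset.card_le_card cover
    _ ≤ ∑ u ∈ G.neighborFinset v,
        ((Finset.range T).filter (fun i => (φ i u).2 = (φ i v).2)).card :=
      Finset.card_biUnion_le
    _ ≤ (G.neighborFinset v).card * (K + 1) := by
        rw [← smul_eq_mul]
        apply Finset.sum_le_card_nsmul
        intro u hu
        exact key u ((SimpleGraph.mem_neighborFinset _ _ _).mp hu)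
    _ ≤ Δ * (K + 1) := by
        apply Nat.mul_le_mul_right
        rw [SimpleGraph.card_neighborFinset_eq_degree]
        exact hdeg v
  rcases Nat.eq_zero_or_pos Δ with hΔ0 | hΔ1
  · rw [hΔ0, Nat.zero_mul] at hTle
    have h1 : 1 ≤ T := by
      calc 1 ≤ q := by omega
      _ = 1 * q := (one_mul q).symm
      _ ≤ K * q := Nat.mul_le_mul_right q hK1
    omega
  · rw [hT] at hTle
    have hTr : (K : ℝ) * q ≤ (Δ : ℝ) * ((K : ℝ) + 1) := by exact_mod_cast hTle
    have hKr : (1 : ℝ) / ε ≤ (⌈1 / ε⌉₊ : ℝ) := Nat.le_ceil _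
    have hKe : (1 : ℝ) + ε ≤ (K : ℝ) * ε := by
      have h1 : (K : ℝ) = 1 + (⌈1 / ε⌉₊ : ℝ) := by rw [hK]; push_cast; ring
      have h2 : (1 : ℝ) ≤ (⌈1 / ε⌉₊ : ℝ) * ε := by
        calc (1 : ℝ) = (1 / ε) * ε := by field_simp
        _ ≤ _ := mul_le_mul_of_nonneg_right hKr hε.le
      rw [h1]
      nlinarith
    have hΔr : (1 : ℝ) ≤ (Δ : ℝ) := by exact_mod_cast hΔ1
    have s1 : (K : ℝ) * ((1 + ε) * Δ) ≤ (K : ℝ) * q :=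
      mul_le_mul_of_nonneg_left hqε (Nat.cast_nonneg K)
    nlinarith [s1.trans hTr, mul_le_mul_of_nonneg_right hKe (by positivity : (0 : ℝ) ≤ (Δ : ℝ)), hε, hΔr]
end

section
/- Let q be a prime, let G be a simple graph on a finite vertex set V, let φ : V → ZMod q × ZMod q be a proper coloring, and let B ⊆ V be an arbitrary set of 'blocked' vertices with (φ(v)).1 ≠ 0 for every v ∈ B. Define φ' by: for each vertex v, writing φ(v) = (a, b), if v ∉ B and every neighbor u of v satisfies (φ(u)).2 ≠ b then φ'(v) = (0, b), and otherwise (i.e., if v ∈ B or some neighbor u of v satisfies (φ(u)).2 = b) φ'(v) = (a, b + a). Then φ' is again a proper coloring of G. -/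
/-- The AG update with a blocked set `B` (whose vertices all have nonzero first
coordinate and are not allowed to finalize) preserves properness. -/
theorem stmt_6 {V : Type*} [Fintype V] (G : SimpleGraph V) (q : ℕ) (hq : q.Prime)
    (φ φ' : V → ZMod q × ZMod q)
    (hproper : ∀ u v : V, G.Adj u v → φ u ≠ φ v)
    (B : Set V) (hB : ∀ v ∈ B, (φ v).1 ≠ 0)
    (hfin : ∀ v : V, v ∉ B → (∀ u, G.Adj v u → (φ u).2 ≠ (φ v).2) →
      φ' v = (0, (φ v).2))
    (hmove : ∀ v : V, (v ∈ B ∨ ∃ u, G.Adj v u ∧ (φ u).2 = (φ v).2) →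
      φ' v = ((φ v).1, (φ v).2 + (φ v).1)) :
    ∀ u v : V, G.Adj u v → φ' u ≠ φ' v := by
  intro u v huv h
  have key : ∀ w : V,
      (φ' w = (0, (φ w).2) ∧ (∀ x, G.Adj w x → (φ x).2 ≠ (φ w).2))
      ∨ (φ' w = ((φ w).1, (φ w).2 + (φ w).1)) := by
    intro w
    by_cases hwB : w ∈ B
    · exact Or.inr (hmove w (Or.inl hwB))
    · by_cases hall : ∀ x, G.Adj w x → (φ x).2 ≠ (φ w).2
      · exact Or.inl ⟨hfin w hwB hall, hall⟩
      · push_neg at hall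
        obtain ⟨x, hx, he⟩ := hall
        exact Or.inr (hmove w (Or.inr ⟨x, hx, he⟩))
  rcases key u with ⟨hu, hun⟩ | hu <;> rcases key v with ⟨hv, hvn⟩ | hv
  · rw [hu, hv] at h
    exact hun v huv (congrArg Prod.snd h).symm
  · rw [hu, hv] at h
    have h1 : (φ v).1 = 0 := ((congrArg Prod.fst h).symm : (φ v).1 = 0)
    have h2 : (φ u).2 = (φ v).2 := by
      have := congrArg Prod.snd h
      simpa [h1] using this
    exact hun v huv h2.symm
  · rw [hu, hv] at h
    have h1 : (φ u).1 = 0 := (congrArg Prod.fst h : (φ u).1 = 0)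
    have h2 : (φ v).2 = (φ u).2 := by
      have := congrArg Prod.snd h
      simpa [h1] using this.symm
    exact hvn u huv.symm h2.symm
  · rw [hu, hv] at h
    simp only [Prod.mk.injEq] at h
    obtain ⟨h1, h2⟩ := h
    rw [h1] at h2
    exact hproper u v huv (Prod.ext h1 (add_right_cancel h2))
end

section
/- Let G be a simple graph on a finite vertex set V in which every vertex has degree at most Δ, and set N = Δ + 1. Let φ₀ : V → Bool × ZMod N be a proper coloring (φ₀(u) ≠ φ₀(v) for every edge {u,v}), and define the sequence φ₀, φ₁, φ₂, … by: for each vertex v, writing φ_i(v) = (f, a), if f = false then φ_{i+1}(v) = (false, a); if f = true and some neighbor u of v satisfies (φ_i(u)).2 = a then φ_{i+1}(v) = (true, a + 1) (addition in ZMod N); and if f = true and every neighbor u of v satisfies (φ_i(u)).2 ≠ a then φ_{i+1}(v) = (false, a). Then every φ_i is a proper coloring, for every vertex v the flag (φ_N(v)).1 equals false, and v ↦ (φ_N(v)).2 is a proper coloring of G with values in ZMod N, i.e., a proper (Δ + 1)-coloring of G. -/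
/-- Exact (Δ+1)-coloring via the flagged AG iteration over `ZMod (Δ+1)`:
starting from a proper coloring by pairs `(flag, a) : Bool × ZMod (Δ+1)`,
after `N = Δ + 1` rounds all flags are `false` and the second coordinates form
a proper (Δ+1)-coloring; moreover every intermediate coloring is proper. -/
theorem stmt_7 {V : Type*} [Fintype V] (G : SimpleGraph V) [DecidableRel G.Adj]
    (Δ : ℕ) (hdeg : ∀ v : V, G.degree v ≤ Δ)
    (φ : ℕ → V → Bool × ZMod (Δ + 1))
    (h0 : ∀ u v : V, G.Adj u v → φ 0 u ≠ φ 0 v)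
    (hfalse : ∀ (i : ℕ) (v : V), (φ i v).1 = false →
      φ (i + 1) v = (false, (φ i v).2))
    (hconf : ∀ (i : ℕ) (v : V), (φ i v).1 = true →
      (∃ u, G.Adj v u ∧ (φ i u).2 = (φ i v).2) →
      φ (i + 1) v = (true, (φ i v).2 + 1))
    (hok : ∀ (i : ℕ) (v : V), (φ i v).1 = true →
      (∀ u, G.Adj v u → (φ i u).2 ≠ (φ i v).2) →
      φ (i + 1) v = (false, (φ i v).2)) :
    (∀ (i : ℕ) (u v : V), G.Adj u v → φ i u ≠ φ i v) ∧
    (∀ v : V, (φ (Δ + 1) v).1 = false) ∧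
    (∀ u v : V, G.Adj u v → (φ (Δ + 1) u).2 ≠ (φ (Δ + 1) v).2) := by
  classical
  -- structure of a step for a vertex that is still true afterwards
  have hstep : ∀ (i : ℕ) (v : V), (φ (i + 1) v).1 = true →
      (φ i v).1 = true ∧ (φ (i + 1) v).2 = (φ i v).2 + 1 ∧
      ∃ u, G.Adj v u ∧ (φ i u).2 = (φ i v).2 := by
    intro i v h
    by_cases hf : (φ i v).1 = true
    · by_cases hc : ∃ u, G.Adj v u ∧ (φ i u).2 = (φ i v).2
      · exact ⟨hf, by rw [hconf i v hf hc], hc⟩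
      · push_neg at hc
        rw [hok i v hf hc] at h
        simp at h
    · have hf' : (φ i v).1 = false := Bool.eq_false_iff.mpr hf
      rw [hfalse i v hf'] at h
      simp at h
  -- false is absorbing
  have hstay : ∀ (i : ℕ) (v : V), (φ i v).1 = false → ∀ j, i ≤ j → φ j v = φ i v := by
    intro i v hf j hij
    induction j, hij using Nat.le_induction with
    | base => rfl
    | succ j hij ih =>
      have hfj : (φ j v).1 = false := by rw [ih]; exact hf
      rw [hfalse j v hfj, ih, ← hf]
  -- properness of every round
  have hp : ∀ (i : ℕ) (u v : V), G.Adj u v → φ i u ≠ φ i v := by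
    intro i
    induction i with
    | zero => exact h0
    | succ i ih =>
      intro u v huv heq
      have hvaldiff : ∀ a b : V, G.Adj a b → (φ i a).1 = true → (φ i b).1 = true →
          (φ i a).2 ≠ (φ i b).2 := by
        intro a b hab ha hb hv
        exact ih a b hab (Prod.ext_iff.mpr ⟨ha.trans hb.symm, hv⟩)
      by_cases hu : (φ i u).1 = true
      · by_cases hv : (φ i v).1 = true
        · by_cases hcu : ∃ w, G.Adj u w ∧ (φ i w).2 = (φ i u).2
          · by_cases hcv : ∃ w, G.Adj v w ∧ (φ i w).2 = (φ i v).2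
            · rw [hconf i u hu hcu, hconf i v hv hcv] at heq
              injection heq with _ h2
              exact hvaldiff u v huv hu hv (add_right_cancel h2)
            · push_neg at hcv
              rw [hconf i u hu hcu, hok i v hv hcv] at heq
              injection heq with h1 _; simp at h1
          · push_neg at hcu
            by_cases hcv : ∃ w, G.Adj v w ∧ (φ i w).2 = (φ i v).2
            · rw [hok i u hu hcu, hconf i v hv hcv] at heq
              injection heq with h1 _; simp at h1
            · push_neg at hcv
              rw [hok i u hu hcu, hok i v hv hcv] at heq
              injection heq with _ h2
              exact hcu v huv (h2 ▸ rfl)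
        · have hv' : (φ i v).1 = false := Bool.eq_false_iff.mpr hv
          by_cases hcu : ∃ w, G.Adj u w ∧ (φ i w).2 = (φ i u).2
          · rw [hconf i u hu hcu, hfalse i v hv'] at heq
            injection heq with h1 _; simp at h1
          · push_neg at hcu
            rw [hok i u hu hcu, hfalse i v hv'] at heq
            injection heq with _ h2
            exact hcu v huv (h2 ▸ rfl)
      · have hu' : (φ i u).1 = false := Bool.eq_false_iff.mpr hu
        by_cases hv : (φ i v).1 = true
        · by_cases hcv : ∃ w, G.Adj v w ∧ (φ i w).2 = (φ i v).2
          · rw [hfalse i u hu', hconf i v hv hcv] at heq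
            injection heq with h1 _; simp at h1
          · push_neg at hcv
            rw [hfalse i u hu', hok i v hv hcv] at heq
            injection heq with _ h2
            exact hcv u huv.symm h2
        · have hv' : (φ i v).1 = false := Bool.eq_false_iff.mpr hv
          rw [hfalse i u hu', hfalse i v hv'] at heq
          injection heq with _ h2
          exact ih u v huv (Prod.ext_iff.mpr ⟨hu'.trans hv'.symm, h2⟩)
  -- value formula while true
  have hval : ∀ (i : ℕ) (v : V), (φ i v).1 = true →
      (φ i v).2 = (φ 0 v).2 + (i : ZMod (Δ + 1)) := by
    intro i
    induction i with
    | zero => intro v _; simp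
    | succ i ih =>
      intro v h
      obtain ⟨ht, hv, -⟩ := hstep i v h
      rw [hv, ih v ht]
      push_cast
      ring
  -- true propagates backwards
  have hmono : ∀ (i j : ℕ), i ≤ j → ∀ v : V, (φ j v).1 = true → (φ i v).1 = true := by
    intro i j hij v
    induction j, hij using Nat.le_induction with
    | base => exact id
    | succ j hij ih => intro h; exact ih (hstep j v h).1
  have hflag : ∀ v : V, (φ (Δ + 1) v).1 = false := by
    intro v
    by_contra hvt
    have hvt : (φ (Δ + 1) v).1 = true := by simpa using hvt
    have key : ∀ j : Fin (Δ + 1), ∃ u, G.Adj v u ∧ (φ (Δ + 1) u).2 = (φ 0 v).2 + ((j : ℕ) : ZMod (Δ + 1)) := by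
      intro j
      have hj1 : (j : ℕ) + 1 ≤ (Δ + 1) := j.2
      have htj1 : (φ ((j : ℕ) + 1) v).1 = true := hmono _ (Δ + 1) hj1 v hvt
      obtain ⟨htj, -, u, hadj, hu⟩ := hstep (j : ℕ) v htj1
      have huf : (φ (j : ℕ) u).1 = false := by
        by_contra huf
        have huf : (φ (j : ℕ) u).1 = true := by simpa using huf
        exact hp (j : ℕ) v u hadj (Prod.ext_iff.mpr ⟨htj.trans huf.symm, hu.symm⟩)
      refine ⟨u, hadj, ?_⟩
      rw [hstay (j : ℕ) u huf (Δ + 1) (le_of_lt j.2), hu, hval (j : ℕ) v htj]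
    choose f hadj hfv using key
    have hinj : Function.Injective f := by
      intro j k hjk
      have h1 := hfv j
      rw [hjk, hfv k] at h1
      have h2 : (((j : ℕ) : ZMod (Δ + 1))) = (((k : ℕ) : ZMod (Δ + 1))) := (add_left_cancel h1).symm
      have h3 : (j : ℕ) = (k : ℕ) := by
        have := congrArg ZMod.val h2
        rwa [ZMod.val_natCast_of_lt j.2, ZMod.val_natCast_of_lt k.2] at this
      exact Fin.ext h3
    have hinj' : Function.Injective
        (fun j : Fin (Δ + 1) => (⟨f j, (SimpleGraph.mem_neighborFinset G v (f j)).2 (hadj j)⟩ :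
          (G.neighborFinset v : Finset V))) := by
      intro j k hjk
      exact hinj (congrArg Subtype.val hjk)
    have hcard := Fintype.card_le_of_injective _ hinj'
    rw [Fintype.card_fin, Fintype.card_coe] at hcard
    have hd := hdeg v
    rw [SimpleGraph.degree] at hd
    omega
  refine ⟨hp, hflag, ?_⟩
  intro u v huv heq
  exact hp (Δ + 1) u v huv (Prod.ext_iff.mpr ⟨(hflag u).trans (hflag v).symm, heq⟩)
end

section
/- Let p be a prime, let G be a simple graph on a finite vertex set V, and let φ : V → ZMod p × ZMod p × ZMod p be a proper coloring (adjacent vertices receive distinct triples). Define φ' by: for each vertex v, writing φ(v) = (c, b, a), (1) if c ≠ 0 and every neighbor u of v has second coordinate (φ(u)).2.1 ≠ b, then φ'(v) = (0, b, a); (2) if c ≠ 0 and some neighbor u has second coordinate equal to b, then φ'(v) = (c, b + c, a); (3) if c = 0 and every neighbor u of v has third coordinate (φ(u)).2.2 ≠ a, then φ'(v) = (0, 0, a); (4) if c = 0 and some neighbor u has third coordinate equal to a, then φ'(v) = (0, b, a + b). All arithmetic is in ZMod p. Then φ' is again a proper coloring of G. -/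
/-- One round of the 3-dimensional Additive-Group algorithm 3AG(p) preserves
properness of a coloring by triples in `ZMod p × ZMod p × ZMod p`. -/
theorem stmt_8 {V : Type*} [Fintype V] (G : SimpleGraph V) (p : ℕ) (hp : p.Prime)
    (φ φ' : V → ZMod p × ZMod p × ZMod p)
    (hproper : ∀ u v : V, G.Adj u v → φ u ≠ φ v)
    (h1 : ∀ v : V, (φ v).1 ≠ 0 → (∀ u, G.Adj v u → (φ u).2.1 ≠ (φ v).2.1) →
      φ' v = (0, (φ v).2.1, (φ v).2.2))
    (h2 : ∀ v : V, (φ v).1 ≠ 0 → (∃ u, G.Adj v u ∧ (φ u).2.1 = (φ v).2.1) →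
      φ' v = ((φ v).1, (φ v).2.1 + (φ v).1, (φ v).2.2))
    (h3 : ∀ v : V, (φ v).1 = 0 → (∀ u, G.Adj v u → (φ u).2.2 ≠ (φ v).2.2) →
      φ' v = (0, 0, (φ v).2.2))
    (h4 : ∀ v : V, (φ v).1 = 0 → (∃ u, G.Adj v u ∧ (φ u).2.2 = (φ v).2.2) →
      φ' v = (0, (φ v).2.1, (φ v).2.2 + (φ v).2.1)) :
    ∀ u v : V, G.Adj u v → φ' u ≠ φ' v := by
  classical
  intro u v hadj heq
  have hadj' : G.Adj v u := hadj.symm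
  have hne := hproper u v hadj
  by_cases hcu : (φ u).1 = 0
  · by_cases hau : ∃ w, G.Adj u w ∧ (φ w).2.2 = (φ u).2.2
    · -- u in case 4
      rw [h4 u hcu hau] at heq
      by_cases hcv : (φ v).1 = 0
      · by_cases hav : ∃ w, G.Adj v w ∧ (φ w).2.2 = (φ v).2.2
        · -- v case 4
          rw [h4 v hcv hav] at heq
          rw [Prod.ext_iff, Prod.ext_iff] at heq
          obtain ⟨-, hb, ha⟩ := heq
          rw [hb] at ha
          have ha' := add_right_cancel ha
          exact hne (Prod.ext (hcu.trans hcv.symm) (Prod.ext hb ha'))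
        · -- v case 3
          push_neg at hav
          rw [h3 v hcv (fun w hw => hav w hw)] at heq
          rw [Prod.ext_iff, Prod.ext_iff] at heq
          obtain ⟨-, hb, ha⟩ := heq
          rw [hb, add_zero] at ha
          exact hav u hadj' ha
      · by_cases hbv : ∃ w, G.Adj v w ∧ (φ w).2.1 = (φ v).2.1
        · rw [h2 v hcv hbv] at heq
          exact hcv (congrArg Prod.fst heq).symm
        · push_neg at hbv
          rw [h1 v hcv (fun w hw => hbv w hw)] at heq
          rw [Prod.ext_iff, Prod.ext_iff] at heq
          exact hbv u hadj' heq.2.1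
    · -- u in case 3
      push_neg at hau
      rw [h3 u hcu (fun w hw => hau w hw)] at heq
      by_cases hcv : (φ v).1 = 0
      · by_cases hav : ∃ w, G.Adj v w ∧ (φ w).2.2 = (φ v).2.2
        · rw [h4 v hcv hav] at heq
          rw [Prod.ext_iff, Prod.ext_iff] at heq
          obtain ⟨-, hb, ha⟩ := heq
          rw [← hb, add_zero] at ha
          exact hau v hadj ha.symm
        · push_neg at hav
          rw [h3 v hcv (fun w hw => hav w hw)] at heq
          rw [Prod.ext_iff, Prod.ext_iff] at heq
          exact hau v hadj heq.2.2.symm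
      · by_cases hbv : ∃ w, G.Adj v w ∧ (φ w).2.1 = (φ v).2.1
        · rw [h2 v hcv hbv] at heq
          exact hcv (congrArg Prod.fst heq).symm
        · push_neg at hbv
          rw [h1 v hcv (fun w hw => hbv w hw)] at heq
          rw [Prod.ext_iff, Prod.ext_iff] at heq
          exact hau v hadj heq.2.2.symm
  · by_cases hbu : ∃ w, G.Adj u w ∧ (φ w).2.1 = (φ u).2.1
    · -- u case 2
      rw [h2 u hcu hbu] at heq
      by_cases hcv : (φ v).1 = 0
      · by_cases hav : ∃ w, G.Adj v w ∧ (φ w).2.2 = (φ v).2.2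
        · rw [h4 v hcv hav] at heq
          exact hcu (congrArg Prod.fst heq)
        · push_neg at hav
          rw [h3 v hcv (fun w hw => hav w hw)] at heq
          exact hcu (congrArg Prod.fst heq)
      · by_cases hbv : ∃ w, G.Adj v w ∧ (φ w).2.1 = (φ v).2.1
        · rw [h2 v hcv hbv] at heq
          rw [Prod.ext_iff, Prod.ext_iff] at heq
          obtain ⟨hc, hb, ha⟩ := heq
          rw [hc] at hb
          have hb' := add_right_cancel hb
          exact hne (Prod.ext hc (Prod.ext hb' ha))
        · push_neg at hbv
          rw [h1 v hcv (fun w hw => hbv w hw)] at heq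
          exact hcu (congrArg Prod.fst heq)
    · -- u case 1
      push_neg at hbu
      rw [h1 u hcu (fun w hw => hbu w hw)] at heq
      by_cases hcv : (φ v).1 = 0
      · by_cases hav : ∃ w, G.Adj v w ∧ (φ w).2.2 = (φ v).2.2
        · rw [h4 v hcv hav] at heq
          rw [Prod.ext_iff, Prod.ext_iff] at heq
          exact hbu v hadj heq.2.1.symm
        · push_neg at hav
          rw [h3 v hcv (fun w hw => hav w hw)] at heq
          rw [Prod.ext_iff, Prod.ext_iff] at heq
          exact hav u hadj' heq.2.2
      · by_cases hbv : ∃ w, G.Adj v w ∧ (φ w).2.1 = (φ v).2.1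
        · rw [h2 v hcv hbv] at heq
          exact hcv (congrArg Prod.fst heq).symm
        · push_neg at hbv
          rw [h1 v hcv (fun w hw => hbv w hw)] at heq
          rw [Prod.ext_iff, Prod.ext_iff] at heq
          exact hbu v hadj heq.2.1.symm
end

section
/- Let G be a simple graph on a finite vertex set V in which every vertex has degree at most Δ, let p ≥ 1 be an integer, and let q be a prime with q ≥ 2⌈Δ/p⌉ + 2. Let φ₀ : V → ZMod q × ZMod q be an arbitrary coloring, and define the sequence φ₀, φ₁, φ₂, … by: for each vertex v, if the number of neighbors u of v with φ₀(u) ≠ φ₀(v) and (φ_i(u)).2 = (φ_i(v)).2 is at most p, then φ_{i+1}(v) = (0, (φ_i(v)).2); otherwise φ_{i+1}(v) = ((φ_i(v)).1, (φ_i(v)).2 + (φ_i(v)).1), with addition in ZMod q. Then, setting T = 2⌈Δ/p⌉ + 1, every vertex v satisfies (φ_T(v)).1 = 0, i.e., after T rounds every color has the form (0, b). -/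
/-- Arbdefective AG: with tolerance `p ≥ 1` and a prime `q ≥ 2⌈Δ/p⌉ + 2`, after
`T = 2⌈Δ/p⌉ + 1` rounds of the arbdefective Additive-Group iteration every vertex
has finalized, i.e., every color has the form `(0, b)`. -/
theorem stmt_9 {V : Type*} [Fintype V] (G : SimpleGraph V) [DecidableRel G.Adj]
    (Δ p q : ℕ) (hp : 1 ≤ p) (hq : q.Prime) (hqΔ : 2 * (Δ ⌈/⌉ p) + 2 ≤ q)
    (hdeg : ∀ v : V, G.degree v ≤ Δ)
    (φ : ℕ → V → ZMod q × ZMod q)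
    (hfin : ∀ (i : ℕ) (v : V),
      ((G.neighborFinset v).filter
        (fun u => φ 0 u ≠ φ 0 v ∧ (φ i u).2 = (φ i v).2)).card ≤ p →
      φ (i + 1) v = (0, (φ i v).2))
    (hmove : ∀ (i : ℕ) (v : V),
      p < ((G.neighborFinset v).filter
        (fun u => φ 0 u ≠ φ 0 v ∧ (φ i u).2 = (φ i v).2)).card →
      φ (i + 1) v = ((φ i v).1, (φ i v).2 + (φ i v).1)) :
    ∀ v : V, (φ (2 * (Δ ⌈/⌉ p) + 1) v).1 = 0 := by
  haveI : Fact q.Prime := ⟨hq⟩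
  haveI : NeZero q := ⟨hq.pos.ne'⟩
  intro v
  by_contra hT0
  set c := Δ ⌈/⌉ p with hc
  set T := 2 * c + 1 with hTdef
  have hTq : T < q := by omega
  have cast_ne : ∀ {x y : ℕ}, x < y → y < q → ((y : ZMod q) - (x : ZMod q) ≠ 0) := by
    intro x y hxy hyq h
    have h2 : ((y - x : ℕ) : ZMod q) = 0 := by push_cast [Nat.cast_sub hxy.le]; exact h
    rw [ZMod.natCast_eq_zero_iff] at h2
    have := Nat.le_of_dvd (by omega) h2
    omega
  have absorb : ∀ (w : V) i, (φ i w).1 = 0 → φ (i + 1) w = φ i w := by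
    intro w i h
    rcases le_or_gt (((G.neighborFinset w).filter
        (fun u => φ 0 u ≠ φ 0 w ∧ (φ i u).2 = (φ i w).2)).card) p with hle | hlt
    · rw [hfin i w hle, ← h]
    · rw [hmove i w hlt, h, add_zero, ← h]
  have absorb' : ∀ (w : V) i j, i ≤ j → (φ i w).1 = 0 → φ j w = φ i w := by
    intro w i j hij h
    induction j, hij using Nat.le_induction with
    | base => rfl
    | succ j hij ih => rw [absorb w j (by rw [ih]; exact h), ih]
  have dich : ∀ (w : V) i,
      φ i w = ((φ 0 w).1, (φ 0 w).2 + (i : ZMod q) * (φ 0 w).1) ∨ (φ i w).1 = 0 := by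
    intro w i
    induction i with
    | zero => left; simp
    | succ i ih =>
      rcases ih with h | h
      · rcases le_or_gt (((G.neighborFinset w).filter
            (fun u => φ 0 u ≠ φ 0 w ∧ (φ i u).2 = (φ i w).2)).card) p with hle | hlt
        · right; rw [hfin i w hle]
        · left
          rw [hmove i w hlt, h]
          refine Prod.ext rfl ?_
          push_cast
          ring
      · right; rw [absorb w i h]; exact h
  have hvne : ∀ i ≤ T, (φ i v).1 ≠ 0 := by
    intro i hi h
    exact hT0 (by rw [absorb' v i T hi h]; exact h)
  set a := (φ 0 v).1 with hadef
  set b := (φ 0 v).2 with hbdef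
  have ha : a ≠ 0 := hvne 0 (Nat.zero_le _)
  have hvlive : ∀ i ≤ T, φ i v = (a, b + (i : ZMod q) * a) := by
    intro i hi
    rcases dich v i with h | h
    · exact h
    · exact absurd h (hvne i hi)
  have hbig : ∀ i < T, p + 1 ≤ ((G.neighborFinset v).filter
      (fun u => φ 0 u ≠ φ 0 v ∧ (φ i u).2 = (φ i v).2)).card := by
    intro i hi
    by_contra hle
    push_neg at hle
    have := hfin i v (Nat.lt_succ_iff.mp hle)
    exact hvne (i + 1) hi (by rw [this])
  -- per-neighbor conflict count ≤ 2
  have hcount : ∀ u : V,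
      ((Finset.range T).filter (fun i => φ 0 u ≠ φ 0 v ∧ (φ i u).2 = (φ i v).2)).card ≤ 2 := by
    intro u
    set C := (Finset.range T).filter (fun i => φ 0 u ≠ φ 0 v ∧ (φ i u).2 = (φ i v).2) with hC
    by_contra hgt
    push_neg at hgt
    have hCne : C.Nonempty := Finset.card_pos.mp (by omega)
    set M := C.max' hCne with hM
    have hMC : M ∈ C := C.max'_mem hCne
    have memC : ∀ x ∈ C, x < T ∧ φ 0 u ≠ φ 0 v ∧ (φ x u).2 = (φ x v).2 := by
      intro x hx
      have := Finset.mem_filter.mp hx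
      exact ⟨Finset.mem_range.mp this.1, this.2.1, this.2.2⟩
    have live_of_lt : ∀ x ∈ C, ∀ y ∈ C, x < y →
        (φ 0 u).2 + (x : ZMod q) * (φ 0 u).1 = b + (x : ZMod q) * a := by
      intro x hx y hy hxy
      obtain ⟨hxT, -, hx2⟩ := memC x hx
      obtain ⟨hyT, -, hy2⟩ := memC y hy
      have hxv : (φ x v).2 = b + (x : ZMod q) * a := by rw [hvlive x (by omega)]
      have hyv : (φ y v).2 = b + (y : ZMod q) * a := by rw [hvlive y (by omega)]
      rcases dich u x with h | h
      · exact ((congrArg Prod.snd h).symm.trans (hx2.trans hxv))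
      · exfalso
        have heq : φ y u = φ x u := absorb' u x y hxy.le h
        have heq2 : b + (y : ZMod q) * a = b + (x : ZMod q) * a := by
          rw [← hyv, ← hy2, heq, hx2, hxv]
        have hz : ((y : ZMod q) - (x : ZMod q)) * a = 0 := by linear_combination heq2
        rcases mul_eq_zero.mp hz with h0 | h0
        · exact cast_ne hxy (by omega) h0
        · exact ha h0
    have two_live : ∀ x ∈ C.erase M, ∀ y ∈ C.erase M, x < y → False := by
      intro x hx y hy hxy
      have hxC := Finset.mem_of_mem_erase hx
      have hyC := Finset.mem_of_mem_erase hy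
      have hyM : y < M :=
        lt_of_le_of_ne (C.le_max' y hyC) (Finset.ne_of_mem_erase hy)
      have e1 := live_of_lt x hxC y hyC hxy
      have e2 := live_of_lt y hyC M hMC hyM
      obtain ⟨hyT, hne, -⟩ := memC y hyC
      have hz : ((y : ZMod q) - (x : ZMod q)) * ((φ 0 u).1 - a) = 0 := by
        linear_combination e2 - e1
      rcases mul_eq_zero.mp hz with h0 | h0
      · exact cast_ne hxy (by omega) h0
      · have hau : (φ 0 u).1 = a := sub_eq_zero.mp h0
        have hbu : (φ 0 u).2 = b := by
          rw [hau] at e1; exact add_right_cancel e1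
        exact hne (Prod.ext hau hbu)
    have herase : (C.erase M).card ≤ 1 := by
      refine Finset.card_le_one.mpr fun x hx y hy => ?_
      by_contra hxy
      rcases Ne.lt_or_gt hxy with h | h
      · exact two_live x hx y hy h
      · exact two_live y hy x hx h
    have := Finset.card_erase_of_mem hMC
    omega
  -- counting
  have hswap : ∑ i ∈ Finset.range T, ((G.neighborFinset v).filter
      (fun u => φ 0 u ≠ φ 0 v ∧ (φ i u).2 = (φ i v).2)).card
      = ∑ u ∈ G.neighborFinset v, ((Finset.range T).filter
        (fun i => φ 0 u ≠ φ 0 v ∧ (φ i u).2 = (φ i v).2)).card := by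
    simp_rw [Finset.card_filter]
    exact Finset.sum_comm
  have hlower : T * (p + 1) ≤ ∑ i ∈ Finset.range T, ((G.neighborFinset v).filter
      (fun u => φ 0 u ≠ φ 0 v ∧ (φ i u).2 = (φ i v).2)).card := by
    calc T * (p + 1) = ∑ _i ∈ Finset.range T, (p + 1) := by
          rw [Finset.sum_const, Finset.card_range, smul_eq_mul]
      _ ≤ _ := Finset.sum_le_sum fun i hi => hbig i (Finset.mem_range.mp hi)
  have hupper : ∑ u ∈ G.neighborFinset v, ((Finset.range T).filter
      (fun i => φ 0 u ≠ φ 0 v ∧ (φ i u).2 = (φ i v).2)).card ≤ 2 * Δ := by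
    calc _ ≤ ∑ _u ∈ G.neighborFinset v, 2 := Finset.sum_le_sum fun u _ => hcount u
      _ = 2 * G.degree v := by
          rw [Finset.sum_const, smul_eq_mul, SimpleGraph.card_neighborFinset_eq_degree,
            mul_comm]
      _ ≤ 2 * Δ := by have := hdeg v; omega
  have hΔpc : Δ ≤ p * c := by
    have := le_smul_ceilDiv (b := Δ) (Nat.lt_of_lt_of_le Nat.zero_lt_one hp)
    simpa [smul_eq_mul] using this
  rw [hswap] at hlower
  have hfinal : T * (p + 1) ≤ 2 * Δ := hlower.trans hupper
  nlinarith [hfinal, hΔpc]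
end

section
/- Let G be a simple graph on a finite vertex set V in which every vertex has degree at most Δ, let p ≥ 1 be an integer, let q be a prime with q ≥ 2⌈Δ/p⌉ + 2, and let φ₀ : V → ZMod q × ZMod q be a coloring that is d-defective, i.e., for every vertex v the number of neighbors u with φ₀(u) = φ₀(v) is at most d. Run the arbdefective iteration: φ_{i+1}(v) = (0, (φ_i(v)).2) if at most p neighbors u of v satisfy φ₀(u) ≠ φ₀(v) and (φ_i(u)).2 = (φ_i(v)).2, and φ_{i+1}(v) = ((φ_i(v)).1, (φ_i(v)).2 + (φ_i(v)).1) otherwise, and set T = 2⌈Δ/p⌉ + 1. For each vertex v let t(v) be the least round i with (φ_i(v)).1 = 0 (such i exists and is at most T). Then for every vertex v, the number of neighbors u of v with φ_T(u) = φ_T(v) and t(u) ≤ t(v) is at most p + d. (In particular, ordering the vertices of each color class of φ_T by t, every vertex has at most p + d neighbors of its own color preceding or tying with it, so each color class induces a subgraph of arboricity O(p + d).) -/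
/-- Arbdefect bound for the arbdefective AG iteration: starting from a
`d`-defective coloring `φ 0` and letting `t v` be the first round at which `v`
finalizes (its first coordinate becomes `0`), every vertex has at most `p + d`
neighbors of its final `φ T`-color that finalized no later than itself
(`T = 2⌈Δ/p⌉ + 1`); hence each color class induces a subgraph of arboricity
`O(p + d)`. -/
theorem stmt_10 {V : Type*} [Fintype V] (G : SimpleGraph V) [DecidableRel G.Adj]
    (Δ p q d : ℕ) (hp : 1 ≤ p) (hq : q.Prime) (hqΔ : 2 * (Δ ⌈/⌉ p) + 2 ≤ q)
    (hdeg : ∀ v : V, G.degree v ≤ Δ)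
    (φ : ℕ → V → ZMod q × ZMod q)
    (hdef : ∀ v : V,
      ((G.neighborFinset v).filter (fun u => φ 0 u = φ 0 v)).card ≤ d)
    (hfin : ∀ (i : ℕ) (v : V),
      ((G.neighborFinset v).filter
        (fun u => φ 0 u ≠ φ 0 v ∧ (φ i u).2 = (φ i v).2)).card ≤ p →
      φ (i + 1) v = (0, (φ i v).2))
    (hmove : ∀ (i : ℕ) (v : V),
      p < ((G.neighborFinset v).filter
        (fun u => φ 0 u ≠ φ 0 v ∧ (φ i u).2 = (φ i v).2)).card →
      φ (i + 1) v = ((φ i v).1, (φ i v).2 + (φ i v).1))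
    (t : V → ℕ)
    (ht : ∀ v : V, (φ (t v) v).1 = 0 ∧ ∀ i : ℕ, i < t v → (φ i v).1 ≠ 0) :
    (∀ v : V, t v ≤ 2 * (Δ ⌈/⌉ p) + 1) ∧
    ∀ v : V,
      ((G.neighborFinset v).filter
        (fun u => φ (2 * (Δ ⌈/⌉ p) + 1) u = φ (2 * (Δ ⌈/⌉ p) + 1) v ∧ t u ≤ t v)).card
        ≤ p + d := by
  haveI := Fact.mk hq
  have hq0 : 0 < q := hq.pos
  set c : ℕ := Δ ⌈/⌉ p with hc
  set T : ℕ := 2 * c + 1 with hTdef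
  have hTq : T < q := by omega
  have hΔc : Δ ≤ p * c := le_smul_ceilDiv (Nat.lt_of_lt_of_le Nat.zero_lt_one hp)
  -- cast injectivity
  have hcast : ∀ i j : ℕ, i < q → j < q → ((i : ZMod q) = (j : ZMod q)) → i = j := by
    intro i j hi hj h
    have h1 := ZMod.val_cast_of_lt hi
    have h2 := ZMod.val_cast_of_lt hj
    rw [← h1, ← h2, h]
  -- pre-finalization formula
  have hpre : ∀ v i, i < t v →
      φ i v = ((φ 0 v).1, (φ 0 v).2 + (i : ZMod q) * (φ 0 v).1) := by
    intro v i
    induction i with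
    | zero => intro _; simp
    | succ i ih =>
      intro hi
      have hi' : i < t v := Nat.lt_of_succ_lt hi
      have hne : (φ (i + 1) v).1 ≠ 0 := (ht v).2 _ hi
      by_cases hcnt : ((G.neighborFinset v).filter
          (fun u => φ 0 u ≠ φ 0 v ∧ (φ i u).2 = (φ i v).2)).card ≤ p
      · exact absurd (by rw [hfin i v hcnt]) hne
      · rw [hmove i v (lt_of_not_ge hcnt), ih hi']
        rw [Prod.ext_iff]
        constructor
        · rfl
        · push_cast
          ring
  -- freezing
  have hfreeze : ∀ v i, (φ i v).1 = 0 → φ (i + 1) v = φ i v := by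
    intro v i h0
    by_cases hcnt : ((G.neighborFinset v).filter
        (fun u => φ 0 u ≠ φ 0 v ∧ (φ i u).2 = (φ i v).2)).card ≤ p
    · rw [hfin i v hcnt, Prod.ext_iff]
      exact ⟨h0.symm, rfl⟩
    · rw [hmove i v (lt_of_not_ge hcnt), Prod.ext_iff]
      refine ⟨rfl, ?_⟩
      rw [h0, add_zero]
  have hpost : ∀ v i, t v ≤ i → φ i v = φ (t v) v := by
    intro v i hi
    obtain ⟨k, rfl⟩ := Nat.exists_eq_add_of_le hi
    induction k with
    | zero => rfl
    | succ k ih =>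
      have h0 : (φ (t v + k) v).1 = 0 := by
        rw [ih (by omega)]; exact (ht v).1
      rw [← Nat.add_assoc, hfreeze v (t v + k) h0, ih (by omega)]
  -- final value formula
  have hfinalval : ∀ v, φ (t v) v =
      (0, (φ 0 v).2 + ((t v - 1 : ℕ) : ZMod q) * (φ 0 v).1) := by
    intro v
    rcases Nat.eq_zero_or_pos (t v) with h0 | hpos
    · have ha := (ht v).1
      rw [h0] at ha ⊢
      rw [Prod.ext_iff]
      refine ⟨ha, ?_⟩
      simp
    · obtain ⟨j, hj⟩ : ∃ j, t v = j + 1 := ⟨t v - 1, by omega⟩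
      have hav : (φ 0 v).1 ≠ 0 := (ht v).2 0 hpos
      have hjlt : j < t v := by omega
      by_cases hcnt : ((G.neighborFinset v).filter
          (fun u => φ 0 u ≠ φ 0 v ∧ (φ j u).2 = (φ j v).2)).card ≤ p
      · rw [hj, hfin j v hcnt, hpre v j hjlt]
        simp
      · exfalso
        have h1 := hmove j v (lt_of_not_ge hcnt)
        have h2 : (φ (j + 1) v).1 = (φ j v).1 := by rw [h1]
        have h3 : (φ j v).1 = (φ 0 v).1 := by rw [hpre v j hjlt]
        have h4 := (ht v).1
        rw [hj] at h4
        exact hav (h3 ▸ h2 ▸ h4)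
  -- general second-coordinate formula
  have hsnd : ∀ v i, (φ i v).2 =
      (φ 0 v).2 + ((min i (t v - 1) : ℕ) : ZMod q) * (φ 0 v).1 := by
    intro v i
    rcases lt_or_ge i (t v) with h | h
    · rw [hpre v i h]
      have : min i (t v - 1) = i := by omega
      rw [this]
    · rw [hpost v i h, hfinalval v]
      have : min i (t v - 1) = t v - 1 := by omega
      rw [this]
  -- part 1
  have part1 : ∀ v, t v ≤ T := by
    intro v
    by_contra hcon
    push_neg at hcon
    have hav : (φ 0 v).1 ≠ 0 := (ht v).2 0 (by omega)
    -- each neighbor conflicts in at most 2 rounds among range T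
    have key : ∀ u ∈ G.neighborFinset v,
        ((Finset.range T).filter
          (fun i => φ 0 u ≠ φ 0 v ∧ (φ i u).2 = (φ i v).2)).card ≤ 2 := by
      intro u _
      by_cases hcol : φ 0 u = φ 0 v
      · simp [hcol]
      · have hvsnd : ∀ i ∈ Finset.range T, (φ i v).2 = (φ 0 v).2 + (i : ZMod q) * (φ 0 v).1 := by
          intro i hi
          rw [Finset.mem_range] at hi
          rw [hpre v i (by omega)]
        set S := (Finset.range T).filter
          (fun i => φ 0 u ≠ φ 0 v ∧ (φ i u).2 = (φ i v).2) with hS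
        have hmem : ∀ i ∈ S, i < T ∧
            (φ 0 u).2 + ((min i (t u - 1) : ℕ) : ZMod q) * (φ 0 u).1
              = (φ 0 v).2 + (i : ZMod q) * (φ 0 v).1 := by
          intro i hi
          rw [hS, Finset.mem_filter, Finset.mem_range] at hi
          refine ⟨hi.1, ?_⟩
          rw [← hsnd u i, hi.2.2, hvsnd i (Finset.mem_range.mpr hi.1)]
        have hsplit := Finset.card_filter_add_card_filter_not
          (s := S) (p := fun i => i ≤ t u - 1)
        have h1 : (S.filter (fun i => i ≤ t u - 1)).card ≤ 1 := by
          rw [Finset.card_le_one]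
          intro i hi j hj
          rw [Finset.mem_filter] at hi hj
          obtain ⟨hiT, hieq⟩ := hmem i hi.1
          obtain ⟨hjT, hjeq⟩ := hmem j hj.1
          rw [min_eq_left hi.2] at hieq
          rw [min_eq_left hj.2] at hjeq
          have hz : ((i : ZMod q) - (j : ZMod q)) * ((φ 0 u).1 - (φ 0 v).1) = 0 := by
            linear_combination hieq - hjeq
          rcases mul_eq_zero.mp hz with h | h
          · exact hcast i j (by omega) (by omega) (by linear_combination h)
          · exfalso
            have hfst : (φ 0 u).1 = (φ 0 v).1 := by linear_combination h
            have hsnd' : (φ 0 u).2 = (φ 0 v).2 := by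
              linear_combination hieq - (i : ZMod q) * hfst
            exact hcol (Prod.ext hfst hsnd')
        have h2 : (S.filter (fun i => ¬ i ≤ t u - 1)).card ≤ 1 := by
          rw [Finset.card_le_one]
          intro i hi j hj
          rw [Finset.mem_filter] at hi hj
          obtain ⟨hiT, hieq⟩ := hmem i hi.1
          obtain ⟨hjT, hjeq⟩ := hmem j hj.1
          rw [min_eq_right (by omega : t u - 1 ≤ i)] at hieq
          rw [min_eq_right (by omega : t u - 1 ≤ j)] at hjeq
          have hz : ((i : ZMod q) - (j : ZMod q)) * (φ 0 v).1 = 0 := by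
            linear_combination hjeq - hieq
          rcases mul_eq_zero.mp hz with h | h
          · exact hcast i j (by omega) (by omega) (by linear_combination h)
          · exact absurd h hav
        omega
    -- lower bound on each round's conflict count
    have hlow : ∀ i ∈ Finset.range T, p + 1 ≤
        ((G.neighborFinset v).filter
          (fun u => φ 0 u ≠ φ 0 v ∧ (φ i u).2 = (φ i v).2)).card := by
      intro i hi
      rw [Finset.mem_range] at hi
      by_contra hle
      push_neg at hle
      have := hfin i v (by omega)
      have h0 : (φ (i + 1) v).1 = 0 := by rw [this]
      exact (ht v).2 (i + 1) (by omega) h0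
    have hsum1 : T * (p + 1) ≤ ∑ i ∈ Finset.range T,
        ((G.neighborFinset v).filter
          (fun u => φ 0 u ≠ φ 0 v ∧ (φ i u).2 = (φ i v).2)).card := by
      calc T * (p + 1) = ∑ _i ∈ Finset.range T, (p + 1) := by
            rw [Finset.sum_const, Finset.card_range, smul_eq_mul]
        _ ≤ _ := Finset.sum_le_sum hlow
    have hswap : ∑ i ∈ Finset.range T,
        ((G.neighborFinset v).filter
          (fun u => φ 0 u ≠ φ 0 v ∧ (φ i u).2 = (φ i v).2)).card
        = ∑ u ∈ G.neighborFinset v,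
          ((Finset.range T).filter
            (fun i => φ 0 u ≠ φ 0 v ∧ (φ i u).2 = (φ i v).2)).card := by
      simp only [Finset.card_filter]
      exact Finset.sum_comm
    have hsum2 : ∑ u ∈ G.neighborFinset v,
        ((Finset.range T).filter
          (fun i => φ 0 u ≠ φ 0 v ∧ (φ i u).2 = (φ i v).2)).card ≤ Δ * 2 := by
      calc _ ≤ ∑ _u ∈ G.neighborFinset v, 2 := Finset.sum_le_sum key
        _ = G.degree v * 2 := by
            rw [Finset.sum_const, SimpleGraph.card_neighborFinset_eq_degree, smul_eq_mul]
        _ ≤ Δ * 2 := Nat.mul_le_mul_right 2 (hdeg v)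
    have hfinal : T * (p + 1) ≤ Δ * 2 := by
      calc T * (p + 1) ≤ _ := hsum1
        _ = _ := hswap
        _ ≤ Δ * 2 := hsum2
    rw [hTdef] at hfinal
    nlinarith
  refine ⟨part1, ?_⟩
  -- part 2
  intro v
  set S := (G.neighborFinset v).filter
    (fun u => φ T u = φ T v ∧ t u ≤ t v) with hSdef
  have hsplit := Finset.card_filter_add_card_filter_not
    (s := S) (p := fun u => φ 0 u = φ 0 v)
  have hsame : (S.filter (fun u => φ 0 u = φ 0 v)).card ≤ d := by
    refine le_trans (Finset.card_le_card ?_) (hdef v)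
    intro u hu
    rw [Finset.mem_filter] at hu ⊢
    rw [hSdef, Finset.mem_filter] at hu
    exact ⟨hu.1.1, hu.2⟩
  have hdiff : (S.filter (fun u => ¬ φ 0 u = φ 0 v)).card ≤ p := by
    rcases Nat.eq_zero_or_pos (t v) with h0 | hpos
    · have : S.filter (fun u => ¬ φ 0 u = φ 0 v) = ∅ := by
        rw [Finset.eq_empty_iff_forall_notMem]
        intro u hu
        rw [Finset.mem_filter, hSdef, Finset.mem_filter] at hu
        obtain ⟨⟨_, hTeq, htu⟩, hne⟩ := hu
        have htu0 : t u = 0 := by omega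
        have h1 : φ T u = φ 0 u := by
          rw [hpost u T (by omega), htu0]
        have h2 : φ T v = φ 0 v := by
          rw [hpost v T (by omega), h0]
        exact hne (by rw [← h1, ← h2, hTeq])
      rw [this]
      simp
    · obtain ⟨j, hj⟩ : ∃ j, t v = j + 1 := ⟨t v - 1, by omega⟩
      have hav : (φ 0 v).1 ≠ 0 := (ht v).2 0 hpos
      have hcnt : ((G.neighborFinset v).filter
          (fun u => φ 0 u ≠ φ 0 v ∧ (φ j u).2 = (φ j v).2)).card ≤ p := by
        by_contra hgt
        push_neg at hgt
        have h1 := hmove j v hgt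
        have h2 : (φ (j + 1) v).1 = (φ j v).1 := by rw [h1]
        have h3 : (φ j v).1 = (φ 0 v).1 := by rw [hpre v j (by omega)]
        have h4 := (ht v).1
        rw [hj] at h4
        exact hav (h3 ▸ h2 ▸ h4)
      refine le_trans (Finset.card_le_card ?_) hcnt
      intro u hu
      rw [Finset.mem_filter, hSdef, Finset.mem_filter] at hu
      obtain ⟨⟨hadj, hTeq, htu⟩, hne⟩ := hu
      rw [Finset.mem_filter]
      refine ⟨hadj, hne, ?_⟩
      -- final snd values agree
      have hfu : φ T u = φ (t u) u := hpost u T (le_trans htu (part1 v))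
      have hfv : φ T v = φ (t v) v := hpost v T (part1 v)
      have hfin_eq : (φ (t u) u).2 = (φ (t v) v).2 := by
        rw [← hfu, ← hfv, hTeq]
      rw [hfinalval u, hfinalval v] at hfin_eq
      have hju : (φ j u).2 = (φ 0 u).2 + ((t u - 1 : ℕ) : ZMod q) * (φ 0 u).1 := by
        rw [hsnd u j]
        have : min j (t u - 1) = t u - 1 := by omega
        rw [this]
      have hjv : (φ j v).2 = (φ 0 v).2 + ((t v - 1 : ℕ) : ZMod q) * (φ 0 v).1 := by
        rw [hsnd v j]
        have : min j (t v - 1) = t v - 1 := by omega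
        rw [this]
      rw [hju, hjv]
      exact hfin_eq
  omega
end

section
/- Let V be a finite linearly ordered set, let G be a simple graph on V, let C be a type of labels, and let out, inn : V → V → C be functions such that for every vertex u: the map v ↦ out u v is injective on the set of neighbors v of u with u < v, and the map v ↦ inn u v is injective on the set of neighbors v of u with v < u. Define the color of an edge {u, v} with u < v to be the pair (out u v, inn v u). Then for every vertex w and every pair (i, j) ∈ C × C, the number of neighbors x of w such that the edge {w, x} has color (i, j) is at most 2. (Equivalently, the edges of any fixed color form a subgraph of maximum degree at most 2, i.e., a disjoint union of paths and cycles.) -/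
/-- The 2-defective edge-coloring of the first stage of the edge-coloring
algorithm: orient each edge towards its larger endpoint; each vertex assigns
distinct `out`-labels to its outgoing edges and distinct `inn`-labels to its
incoming edges; the color of an edge is the pair (tail label, head label). Then
every vertex has at most 2 incident edges of any fixed color `(i, j)`. -/
theorem stmt_12 {V : Type*} [Fintype V] [LinearOrder V]
    (G : SimpleGraph V) [DecidableRel G.Adj]
    {C : Type*} [DecidableEq C] (out inn : V → V → C)
    (hout : ∀ u v w : V, G.Adj u v → G.Adj u w → u < v → u < w →
      out u v = out u w → v = w)
    (hinn : ∀ u v w : V, G.Adj u v → G.Adj u w → v < u → w < u →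
      inn u v = inn u w → v = w) :
    ∀ (w : V) (i j : C),
      ((G.neighborFinset w).filter
        (fun x => (w < x ∧ out w x = i ∧ inn x w = j) ∨
                  (x < w ∧ out x w = i ∧ inn w x = j))).card ≤ 2 := by
  intro w i j
  have hsub : (G.neighborFinset w).filter
        (fun x => (w < x ∧ out w x = i ∧ inn x w = j) ∨
                  (x < w ∧ out x w = i ∧ inn w x = j)) ⊆
      ((G.neighborFinset w).filter (fun x => w < x ∧ out w x = i)) ∪
      ((G.neighborFinset w).filter (fun x => x < w ∧ inn w x = j)) := by
    intro x hx
    simp only [Finset.mem_filter, Finset.mem_union] at hx ⊢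
    rcases hx with ⟨hm, h | h⟩
    · exact Or.inl ⟨hm, h.1, h.2.1⟩
    · exact Or.inr ⟨hm, h.1, h.2.2⟩
  refine (Finset.card_le_card hsub).trans ((Finset.card_union_le _ _).trans ?_)
  have h1 : ((G.neighborFinset w).filter (fun x => w < x ∧ out w x = i)).card ≤ 1 := by
    apply Finset.card_le_one.2
    intro a ha b hb
    simp only [Finset.mem_filter, SimpleGraph.mem_neighborFinset] at ha hb
    exact hout w a b ha.1 hb.1 ha.2.1 hb.2.1 (ha.2.2.trans hb.2.2.symm)
  have h2 : ((G.neighborFinset w).filter (fun x => x < w ∧ inn w x = j)).card ≤ 1 := by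
    apply Finset.card_le_one.2
    intro a ha b hb
    simp only [Finset.mem_filter, SimpleGraph.mem_neighborFinset] at ha hb
    exact hinn w a b ha.1 hb.1 ha.2.1 hb.2.1 (ha.2.2.trans hb.2.2.symm)
  omega
end

section
/- Let G be a simple graph on a finite vertex set V and let ψ : V → ℕ be a proper coloring of G (ψ(u) ≠ ψ(v) for every edge {u,v}). Suppose S ⊆ V satisfies the fixed-point property: for every vertex v, v ∈ S if and only if every neighbor u of v with ψ(u) < ψ(v) satisfies u ∉ S. Then S is a maximal independent set of G: no two vertices of S are adjacent, and every vertex not in S has a neighbor in S. -/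
/-- If `ψ` is a proper coloring of `G` and `S` satisfies the fixed-point property
(`v ∈ S` iff no neighbor of `v` of smaller color is in `S`), then `S` is a
maximal independent set of `G`. -/
theorem stmt_13 {V : Type*} [Fintype V] (G : SimpleGraph V)
    (ψ : V → ℕ) (hproper : ∀ u v : V, G.Adj u v → ψ u ≠ ψ v)
    (S : Set V)
    (hfix : ∀ v : V, v ∈ S ↔ ∀ u : V, G.Adj v u → ψ u < ψ v → u ∉ S) :
    (∀ u v : V, u ∈ S → v ∈ S → ¬ G.Adj u v) ∧
    (∀ v : V, v ∉ S → ∃ u : V, G.Adj v u ∧ u ∈ S) := by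
  constructor
  · intro u v hu hv hadj
    rcases lt_or_gt_of_ne (hproper u v hadj) with h | h
    · exact (hfix v).mp hv u hadj.symm h hu
    · exact (hfix u).mp hu v hadj h hv
  · intro v hv
    by_contra hno
    push_neg at hno
    exact hv ((hfix v).mpr fun u hadj _ hu => hno u hadj hu)
end
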